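/- arXiv:quant-ph/0212065 — 13 statements merged into one kernel-verified Lean document; each statement's English description precedes it below -/
import Mathlib

section
/- Any partial order ⊑ on Δ² with bottom element (1/2,1/2) satisfying the mixing law (x ⊑ y and p ∈ [0,1] imply x ⊑ (1-p)x + py ⊑ y) is equal to the order defined by (x₁,x₂) ⊑ (y₁,y₂) iff (y₁ ≤ x₁ ≤ 1/2) or (1/2 ≤ x₁ ≤ y₁). -/
/-- Membership in Δ²: pairs (x₁,x₂) ∈ [0,1]² with x₁ + x₂ = 1. -/
def InDelta2 (x : ℝ × ℝ) : Prop :=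
  0 ≤ x.1 ∧ x.1 ≤ 1 ∧ 0 ≤ x.2 ∧ x.2 ≤ 1 ∧ x.1 + x.2 = 1

/-- The order on Δ²: (x₁,x₂) ⊑ (y₁,y₂) iff (y₁ ≤ x₁ ≤ 1/2) or (1/2 ≤ x₁ ≤ y₁). -/
def Le2 (x y : ℝ × ℝ) : Prop :=
  (y.1 ≤ x.1 ∧ x.1 ≤ 1 / 2) ∨ (1 / 2 ≤ x.1 ∧ x.1 ≤ y.1)

/-- Componentwise convex combination (1-p)·x + p·y. -/
def mix2 (p : ℝ) (x y : ℝ × ℝ) : ℝ × ℝ :=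
  ((1 - p) * x.1 + p * y.1, (1 - p) * x.2 + p * y.2)

lemma bot_in : InDelta2 (1 / 2, 1 / 2) := by
  constructor <;> norm_num

/-- Any partial order on Δ² with bottom (1/2,1/2) satisfying the mixing law
equals the order Le2. -/
theorem stmt2 (r : ℝ × ℝ → ℝ × ℝ → Prop)
    (hrefl : ∀ x, InDelta2 x → r x x)
    (hantisymm : ∀ x y, InDelta2 x → InDelta2 y → r x y → r y x → x = y)
    (htrans : ∀ x y z, InDelta2 x → InDelta2 y → InDelta2 z →
      r x y → r y z → r x z)
    (hbot : ∀ x, InDelta2 x → r (1 / 2, 1 / 2) x)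
    (hmix : ∀ x y, InDelta2 x → InDelta2 y → r x y →
      ∀ p : ℝ, 0 ≤ p → p ≤ 1 → r x (mix2 p x y) ∧ r (mix2 p x y) y) :
    ∀ x y, InDelta2 x → InDelta2 y → (r x y ↔ Le2 x y) := by
  have key : ∀ x y, InDelta2 x → InDelta2 y → Le2 x y → r x y := by
    intro x y hx hy hle
    obtain ⟨hx0, hx1, hx2, hx3, hxs⟩ := hx
    obtain ⟨hy0, hy1, hy2, hy3, hys⟩ := hy
    by_cases hxb : x.1 = 1 / 2
    · have hxe : x = (1 / 2, 1 / 2) := by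
        have : x.2 = 1 / 2 := by linarith
        exact Prod.ext hxb this
      rw [hxe]
      exact hbot y ⟨hy0, hy1, hy2, hy3, hys⟩
    · rcases hle with ⟨h1, h2⟩ | ⟨h1, h2⟩
      · -- y.1 ≤ x.1 < 1/2
        have hlt : x.1 < 1 / 2 := lt_of_le_of_ne h2 hxb
        have hd : 0 < 1 / 2 - y.1 := by linarith
        set p : ℝ := (1 / 2 - x.1) / (1 / 2 - y.1) with hp
        have hp0 : 0 ≤ p := div_nonneg (by linarith) (by linarith)
        have hp1 : p ≤ 1 := by
          rw [hp, div_le_one hd]; linarith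
        have hpe : p * (1 / 2 - y.1) = 1 / 2 - x.1 :=
          div_mul_cancel₀ _ (ne_of_gt hd)
        have hme : mix2 p (1 / 2, 1 / 2) y = x := by
          apply Prod.ext
          · show (1 - p) * (1 / 2) + p * y.1 = x.1
            linear_combination -hpe
          · show (1 - p) * (1 / 2) + p * y.2 = x.2
            linear_combination hpe - hxs + p * hys
        have := (hmix (1 / 2, 1 / 2) y bot_in ⟨hy0, hy1, hy2, hy3, hys⟩
          (hbot y ⟨hy0, hy1, hy2, hy3, hys⟩) p hp0 hp1).2
        rwa [hme] at this
      · -- 1/2 < x.1 ≤ y.1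
        have hlt : 1 / 2 < x.1 := lt_of_le_of_ne h1 (Ne.symm hxb)
        have hd : 0 < y.1 - 1 / 2 := by linarith
        set p : ℝ := (x.1 - 1 / 2) / (y.1 - 1 / 2) with hp
        have hp0 : 0 ≤ p := div_nonneg (by linarith) (by linarith)
        have hp1 : p ≤ 1 := by
          rw [hp, div_le_one hd]; linarith
        have hpe : p * (y.1 - 1 / 2) = x.1 - 1 / 2 :=
          div_mul_cancel₀ _ (ne_of_gt hd)
        have hme : mix2 p (1 / 2, 1 / 2) y = x := by
          apply Prod.ext
          · show (1 - p) * (1 / 2) + p * y.1 = x.1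
            linear_combination hpe
          · show (1 - p) * (1 / 2) + p * y.2 = x.2
            linear_combination -hpe - hxs + p * hys
        have := (hmix (1 / 2, 1 / 2) y bot_in ⟨hy0, hy1, hy2, hy3, hys⟩
          (hbot y ⟨hy0, hy1, hy2, hy3, hys⟩) p hp0 hp1).2
        rwa [hme] at this
  intro x y hx hy
  constructor
  · intro hr
    by_contra hnle
    obtain ⟨hx0, hx1, hx2, hx3, hxs⟩ := hx
    obtain ⟨hy0, hy1, hy2, hy3, hys⟩ := hy
    have hx' : InDelta2 x := ⟨hx0, hx1, hx2, hx3, hxs⟩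
    have hy' : InDelta2 y := ⟨hy0, hy1, hy2, hy3, hys⟩
    have hA : ¬(y.1 ≤ x.1 ∧ x.1 ≤ 1 / 2) := fun h => hnle (Or.inl h)
    have hB : ¬(1 / 2 ≤ x.1 ∧ x.1 ≤ y.1) := fun h => hnle (Or.inr h)
    rcases lt_trichotomy x.1 (1 / 2) with hlt | heq | hgt
    · have hxy : x.1 < y.1 := by
        by_contra h; exact hA ⟨by linarith, le_of_lt hlt⟩
      rcases le_or_gt y.1 (1 / 2) with hyle | hygt
      · -- Le2 y x holds
        have : r y x := key y x hy' hx' (Or.inl ⟨le_of_lt hxy, hyle⟩)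
        have := hantisymm x y hx' hy' hr this
        rw [this] at hxy; exact lt_irrefl _ hxy
      · -- mix to bottom
        have hd : 0 < y.1 - x.1 := by linarith
        set p : ℝ := (1 / 2 - x.1) / (y.1 - x.1) with hp
        have hp0 : 0 ≤ p := div_nonneg (by linarith) (by linarith)
        have hp1 : p ≤ 1 := by rw [hp, div_le_one hd]; linarith
        have hpe : p * (y.1 - x.1) = 1 / 2 - x.1 :=
          div_mul_cancel₀ _ (ne_of_gt hd)
        have hme : mix2 p x y = (1 / 2, 1 / 2) := by
          apply Prod.ext
          · show (1 - p) * x.1 + p * y.1 = 1 / 2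
            linear_combination hpe
          · show (1 - p) * x.2 + p * y.2 = 1 / 2
            linear_combination -hpe + (1 - p) * hxs + p * hys
        have h1 := (hmix x y hx' hy' hr p hp0 hp1).1
        rw [hme] at h1
        have := hantisymm x (1 / 2, 1 / 2) hx' bot_in h1 (hbot x hx')
        have : x.1 = 1 / 2 := by rw [this]
        linarith
    · exact hnle (by
        rcases le_total y.1 (1 / 2) with h | h
        · exact Or.inl ⟨by linarith, le_of_eq heq⟩
        · exact Or.inr ⟨ge_of_eq heq, by linarith⟩)
    · have hxy : y.1 < x.1 := by
        by_contra h; exact hB ⟨le_of_lt hgt, by linarith⟩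
      rcases le_or_gt (1 / 2) y.1 with hyge | hylt
      · have : r y x := key y x hy' hx' (Or.inr ⟨hyge, le_of_lt hxy⟩)
        have := hantisymm x y hx' hy' hr this
        rw [this] at hxy; exact lt_irrefl _ hxy
      · have hd : 0 < x.1 - y.1 := by linarith
        set p : ℝ := (x.1 - 1 / 2) / (x.1 - y.1) with hp
        have hp0 : 0 ≤ p := div_nonneg (by linarith) (by linarith)
        have hp1 : p ≤ 1 := by rw [hp, div_le_one hd]; linarith
        have hpe : p * (x.1 - y.1) = x.1 - 1 / 2 :=
          div_mul_cancel₀ _ (ne_of_gt hd)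
        have hme : mix2 p x y = (1 / 2, 1 / 2) := by
          apply Prod.ext
          · show (1 - p) * x.1 + p * y.1 = 1 / 2
            linear_combination -hpe
          · show (1 - p) * x.2 + p * y.2 = 1 / 2
            linear_combination hpe + (1 - p) * hxs + p * hys
        have h1 := (hmix x y hx' hy' hr p hp0 hp1).1
        rw [hme] at h1
        have := hantisymm x (1 / 2, 1 / 2) hx' bot_in h1 (hbot x hx')
        have : x.1 = 1 / 2 := by rw [this]
        linarith
  · exact key x y hx hy
end

section
/- The Bayesian order ⊑ on Δⁿ (n ≥ 2) is a partial order: it is reflexive, antisymmetric, and transitive. -/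
open Finset

/-- Δⁿ: probability distributions on {1,…,n}. -/
def IsDist {n : ℕ} (x : Fin n → ℝ) : Prop :=
  (∀ i, 0 ≤ x i) ∧ ∑ i, x i = 1

/-- The adjacent-index inequalities  xᵢ yᵢ₊₁ ≤ xᵢ₊₁ yᵢ  for all i ∈ {1,…,n-1}. -/
def AdjLE {n : ℕ} (x y : Fin n → ℝ) : Prop :=
  ∀ i : ℕ, ∀ h : i + 1 < n,
    x ⟨i, Nat.lt_of_succ_lt h⟩ * y ⟨i + 1, h⟩ ≤ x ⟨i + 1, h⟩ * y ⟨i, Nat.lt_of_succ_lt h⟩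

/-- The Bayesian order on Δⁿ: x ⊑ y iff some permutation σ monotonizes both
(x∘σ, y∘σ decreasing, i.e. in Λⁿ) and the adjacent inequalities hold. -/
def BayesLE {n : ℕ} (x y : Fin n → ℝ) : Prop :=
  ∃ σ : Equiv.Perm (Fin n),
    Antitone (x ∘ σ) ∧ Antitone (y ∘ σ) ∧ AdjLE (x ∘ σ) (y ∘ σ)

namespace BayesAux

variable {n : ℕ}

/-- Comonotonicity: x strictly increases ⇒ y weakly increases. -/
def Comon (x y : Fin n → ℝ) : Prop := ∀ u v, x u < x v → y u ≤ y v

/-- Pairwise cross inequality on dominated pairs. -/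
def PairLE (x y : Fin n → ℝ) : Prop :=
  ∀ u v, x v ≤ x u → y v ≤ y u → x u * y v ≤ x v * y u

/-- Permutation-free characterization. -/
def Q (x y : Fin n → ℝ) : Prop := Comon x y ∧ Comon y x ∧ PairLE x y

lemma comon_of_antitone {x y : Fin n → ℝ} (σ : Equiv.Perm (Fin n))
    (hx : Antitone (x ∘ σ)) (hy : Antitone (y ∘ σ)) : Comon x y := by
  intro u v huv
  rcases le_total (σ.symm u) (σ.symm v) with h | h
  · have := hx h
    simp only [Function.comp_apply, Equiv.apply_symm_apply] at this
    exact absurd huv (not_lt.2 this)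
  · have := hy h
    simp only [Function.comp_apply, Equiv.apply_symm_apply] at this
    exact this

lemma pairwise_of_adj {x y : Fin n → ℝ} (hx0 : ∀ i, 0 ≤ x i) (hy0 : ∀ i, 0 ≤ y i)
    (hx : Antitone x) (hy : Antitone y) (hadj : AdjLE x y) :
    ∀ i j : Fin n, i ≤ j → x i * y j ≤ x j * y i := by
  have key : ∀ d : ℕ, ∀ i j : Fin n, (j : ℕ) = (i : ℕ) + d → x i * y j ≤ x j * y i := by
    intro d
    induction d with
    | zero =>
      intro i j hij
      have : j = i := Fin.ext (by omega)
      subst this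
      exact le_refl _
    | succ d ih =>
      intro i j hij
      have hmn : (i : ℕ) + d < n := by omega
      set m : Fin n := ⟨(i : ℕ) + d, hmn⟩ with hm
      have hih : x i * y m ≤ x m * y i := ih i m rfl
      have hjeq : j = ⟨(i : ℕ) + d + 1, by omega⟩ :=
        Fin.ext (show (j : ℕ) = (i : ℕ) + d + 1 by omega)
      have hadj' : x m * y j ≤ x j * y m := by
        have := hadj ((i : ℕ) + d) (by omega)
        rw [hjeq]; exact this
      have him : i ≤ m := Fin.le_def.mpr (by show (i : ℕ) ≤ (i : ℕ) + d; omega)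
      have hmj : m ≤ j := Fin.le_def.mpr (by show (i : ℕ) + d ≤ (j : ℕ); omega)
      rcases (hx0 m).eq_or_lt with hxm | hxm
      · -- x m = 0  (hxm : 0 = x m)
        have hxj : x j = 0 := le_antisymm (le_trans (hx hmj) hxm.symm.le) (hx0 j)
        have h0 : x i * y m ≤ 0 := le_trans hih (by rw [← hxm, zero_mul])
        have hzero : x i * y m = 0 := le_antisymm h0 (mul_nonneg (hx0 i) (hy0 m))
        rcases mul_eq_zero.1 hzero with hxi | hym
        · rw [hxi, hxj, zero_mul, zero_mul]
        · have hyj : y j = 0 := le_antisymm (le_trans (hy hmj) hym.le) (hy0 j)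
          rw [hyj, mul_zero]
          exact mul_nonneg (hx0 j) (hy0 i)
      · rcases (hy0 m).eq_or_lt with hym | hym
        · -- y m = 0
          have hyj : y j = 0 := le_antisymm (le_trans (hy hmj) hym.symm.le) (hy0 j)
          rw [hyj, mul_zero]
          exact mul_nonneg (hx0 j) (hy0 i)
        · -- both positive: multiply the two inequalities and cancel
          have H : (x i * y m) * (x m * y j) ≤ (x m * y i) * (x j * y m) :=
            mul_le_mul hih hadj' (mul_nonneg (hx0 m) (hy0 j)) (mul_nonneg (hx0 m) (hy0 i))
          have H2 : (x m * y m) * (x i * y j) ≤ (x m * y m) * (x j * y i) := by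
            linear_combination H
          exact le_of_mul_le_mul_left H2 (mul_pos hxm hym)
  intro i j hij
  exact key ((j : ℕ) - (i : ℕ)) i j (by omega)

lemma bayes_to_q {x y : Fin n → ℝ} (hx0 : ∀ i, 0 ≤ x i) (hy0 : ∀ i, 0 ≤ y i)
    (h : BayesLE x y) : Q x y := by
  obtain ⟨σ, hxa, hya, hadj⟩ := h
  refine ⟨comon_of_antitone σ hxa hya, comon_of_antitone σ hya hxa, ?_⟩
  intro u v hxvu hyvu
  have key := pairwise_of_adj (x := x ∘ σ) (y := y ∘ σ)
    (fun i => hx0 _) (fun i => hy0 _) hxa hya hadj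
  set i := σ.symm u with hi
  set j := σ.symm v with hj
  have hu : σ i = u := Equiv.apply_symm_apply σ u
  have hv : σ j = v := Equiv.apply_symm_apply σ v
  rcases le_total i j with hij | hij
  · have := key i j hij
    simp only [Function.comp_apply, hu, hv] at this
    exact this
  · -- then x u ≤ x v and y u ≤ y v, so everything is equal
    have h1 : x u ≤ x v := by
      have := hxa hij; simp only [Function.comp_apply, hu, hv] at this; exact this
    have h2 : y u ≤ y v := by
      have := hya hij; simp only [Function.comp_apply, hu, hv] at this; exact this
    have e1 : x u = x v := le_antisymm h1 hxvu
    have e2 : y u = y v := le_antisymm h2 hyvu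
    rw [e1, e2]

lemma q_to_bayes {x y : Fin n → ℝ} (h : Q x y) : BayesLE x y := by
  obtain ⟨hc1, hc2, hp⟩ := h
  set s : Fin n → ℝ := fun i => -(x i + y i) with hs
  set σ := Tuple.sort s with hσ
  have hmono : Monotone (s ∘ σ) := Tuple.monotone_sort s
  have hsum : Antitone (fun i => x (σ i) + y (σ i)) := by
    intro i j hij
    have := hmono hij
    simp only [Function.comp_apply, hs] at this
    show x (σ j) + y (σ j) ≤ x (σ i) + y (σ i)
    linarith
  have hxa : Antitone (x ∘ σ) := by
    intro i j hij
    by_contra hcon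
    push_neg at hcon
    simp only [Function.comp_apply] at hcon
    have hy' : y (σ i) ≤ y (σ j) := hc1 _ _ hcon
    have := hsum hij
    simp only at this
    linarith
  have hya : Antitone (y ∘ σ) := by
    intro i j hij
    by_contra hcon
    push_neg at hcon
    simp only [Function.comp_apply] at hcon
    have hx' : x (σ i) ≤ x (σ j) := hc2 _ _ hcon
    have := hsum hij
    simp only at this
    linarith
  refine ⟨σ, hxa, hya, ?_⟩
  intro i h
  have hle : (⟨i, Nat.lt_of_succ_lt h⟩ : Fin n) ≤ ⟨i + 1, h⟩ := by
    simp [Fin.le_def]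
  exact hp (σ ⟨i, Nat.lt_of_succ_lt h⟩) (σ ⟨i + 1, h⟩) (hxa hle) (hya hle)

lemma exists_pos {x : Fin n → ℝ} (hx : IsDist x) : ∃ u, 0 < x u := by
  by_contra hcon
  push_neg at hcon
  have : ∀ u, x u = 0 := fun u => le_antisymm (hcon u) (hx.1 u)
  have : (∑ i, x i) = 0 := Finset.sum_eq_zero fun i _ => this i
  rw [hx.2] at this
  norm_num at this

lemma supp_zero {x y : Fin n → ℝ} (hx : IsDist x) (hy0 : ∀ i, 0 ≤ y i)
    (hq : Q x y) : ∀ v, x v = 0 → y v = 0 := by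
  intro v hv
  obtain ⟨u, hu⟩ := exists_pos hx
  rcases le_or_gt (y v) (y u) with hyv | hyv
  · have := hq.2.2 u v (by rw [hv]; exact le_of_lt hu) hyv
    rw [hv, zero_mul] at this
    nlinarith [hy0 v]
  · have := hq.2.1 u v hyv
    rw [hv] at this
    linarith

lemma q_refl (x : Fin n → ℝ) : Q x x :=
  ⟨fun _ _ h => le_of_lt h, fun _ _ h => le_of_lt h,
   fun u v _ _ => le_of_eq (mul_comm _ _)⟩

lemma q_antisymm {x y : Fin n → ℝ} (hx : IsDist x) (hy : IsDist y)
    (hxy : Q x y) (hyx : Q y x) : x = y := by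
  have key : ∀ u v, x u * y v = x v * y u := by
    intro u v
    -- totality: one of the two dominates
    rcases le_total (x v) (x u) with h1 | h1
    · rcases le_or_gt (y v) (y u) with h2 | h2
      · have a1 := hxy.2.2 u v h1 h2
        have a2 := hyx.2.2 u v h2 h1
        linarith [a1, a2]
      · -- y u < y v: Comon y x gives x u ≤ x v, so x u = x v; then x u = 0
        have hle := hxy.2.1 u v h2
        have ex : x u = x v := le_antisymm hle h1
        -- PairLE y x (from Q y x) on pair (v dominates u)
        have hp := hyx.2.2 v u h2.le hle
        -- hp : y v * x u ≤ y u * x v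
        have hx0 : x u = 0 := by
          by_contra hne
          have hpos : 0 < x u := lt_of_le_of_ne (hx.1 u) (Ne.symm hne)
          have h3 : x u * y u < x u * y v := mul_lt_mul_of_pos_left h2 hpos
          rw [← ex] at hp
          nlinarith [hp, h3]
        have hxv0 : x v = 0 := ex ▸ hx0
        rw [hx0, hxv0, zero_mul, zero_mul]
    · rcases le_or_gt (y u) (y v) with h2 | h2
      · have a1 := hxy.2.2 v u h1 h2
        have a2 := hyx.2.2 v u h2 h1
        linarith [a1, a2]
      · have hle := hxy.2.1 v u h2
        have ex : x u = x v := le_antisymm h1 hle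
        have hp := hyx.2.2 u v h2.le hle
        have hx0 : x u = 0 := by
          by_contra hne
          have hpos : 0 < x u := lt_of_le_of_ne (hx.1 u) (Ne.symm hne)
          have hposv : 0 < x v := ex ▸ hpos
          have h3 : x v * y v < x v * y u := mul_lt_mul_of_pos_left h2 hposv
          rw [ex] at hp
          nlinarith [hp, h3]
        have hxv0 : x v = 0 := ex ▸ hx0
        rw [hx0, hxv0, zero_mul, zero_mul]
  funext u
  calc x u = x u * ∑ v, y v := by rw [hy.2, mul_one]
    _ = ∑ v, x u * y v := Finset.mul_sum _ _ _
    _ = ∑ v, x v * y u := Finset.sum_congr rfl fun v _ => key u v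
    _ = (∑ v, x v) * y u := (Finset.sum_mul _ _ _).symm
    _ = y u := by rw [hx.2, one_mul]

lemma q_trans {x y z : Fin n → ℝ} (hx : IsDist x) (hy : IsDist y) (hz : IsDist z)
    (hxy : Q x y) (hyz : Q y z) : Q x z := by
  have hsuppyz : ∀ v, y v = 0 → z v = 0 := supp_zero hy hz.1 hyz
  refine ⟨?_, ?_, ?_⟩
  · -- Comon x z
    intro u v huv
    have hy1 : y u ≤ y v := hxy.1 u v huv
    rcases eq_or_lt_of_le hy1 with he | hlt
    · -- y u = y v : show y u = 0 using PairLE x y, then z u = z v = 0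
      have hp := hxy.2.2 v u (le_of_lt huv) he.le
      -- hp : x v * y u ≤ x u * y v
      have hyu0 : y u = 0 := by
        by_contra hne
        have hpos : 0 < y u := lt_of_le_of_ne (hy.1 u) (Ne.symm hne)
        have h3 : y u * x u < y u * x v := mul_lt_mul_of_pos_left huv hpos
        rw [← he] at hp
        nlinarith [hp, h3]
      have hzu : z u = 0 := hsuppyz u hyu0
      have hzv : z v = 0 := hsuppyz v (he ▸ hyu0)
      rw [hzu, hzv]
    · exact hyz.1 u v hlt
  · -- Comon z x
    intro u v huv
    have hy1 : y u ≤ y v := hyz.2.1 u v huv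
    rcases eq_or_lt_of_le hy1 with he | hlt
    · by_contra hcon
      push_neg at hcon
      have hp := hxy.2.2 u v (le_of_lt hcon) he.ge
      have hyu0 : y u = 0 := by
        by_contra hne
        have hpos : 0 < y u := lt_of_le_of_ne (hy.1 u) (Ne.symm hne)
        have h3 : y u * x v < y u * x u := mul_lt_mul_of_pos_left hcon hpos
        rw [← he] at hp
        nlinarith [hp, h3]
      have hzu : z u = 0 := hsuppyz u hyu0
      have hzv : z v = 0 := hsuppyz v (he ▸ hyu0)
      rw [hzu, hzv] at huv
      exact lt_irrefl _ huv
    · exact hxy.2.1 u v hlt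
  · -- PairLE x z
    intro u v hxvu hzvu
    rcases le_or_gt (y v) (y u) with hyvu | hyvu
    · have h1 := hxy.2.2 u v hxvu hyvu
      have h2 := hyz.2.2 u v hyvu hzvu
      rcases (hy.1 v).eq_or_lt with hyv | hyv
      · have hzv : z v = 0 := hsuppyz v hyv.symm
        rw [hzv, mul_zero]
        exact mul_nonneg (hx.1 v) (hz.1 u)
      · have hyu : 0 < y u := lt_of_lt_of_le hyv hyvu
        have H : (x u * y v) * (y u * z v) ≤ (x v * y u) * (y v * z u) :=
          mul_le_mul h1 h2 (mul_nonneg (hy.1 u) (hz.1 v)) (mul_nonneg (hx.1 v) (hy.1 u))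
        have H2 : (y u * y v) * (x u * z v) ≤ (y u * y v) * (x v * z u) := by
          linear_combination H
        exact le_of_mul_le_mul_left H2 (mul_pos hyu hyv)
    · have ex : x u = x v := le_antisymm (hxy.2.1 u v hyvu) hxvu
      have ez : z u = z v := le_antisymm (hyz.1 u v hyvu) hzvu
      rw [ex, ez]

end BayesAux

/-- The Bayesian order on Δⁿ (n ≥ 2) is reflexive, antisymmetric and transitive. -/
theorem stmt4 {n : ℕ} (hn : 2 ≤ n) :
    (∀ x : Fin n → ℝ, IsDist x → BayesLE x x) ∧
    (∀ x y : Fin n → ℝ, IsDist x → IsDist y →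
      BayesLE x y → BayesLE y x → x = y) ∧
    (∀ x y z : Fin n → ℝ, IsDist x → IsDist y → IsDist z →
      BayesLE x y → BayesLE y z → BayesLE x z) := by
  refine ⟨?_, ?_, ?_⟩
  · intro x _
    exact BayesAux.q_to_bayes (BayesAux.q_refl x)
  · intro x y hx hy hxy hyx
    exact BayesAux.q_antisymm hx hy
      (BayesAux.bayes_to_q hx.1 hy.1 hxy) (BayesAux.bayes_to_q hy.1 hx.1 hyx)
  · intro x y z hx hy hz hxy hyz
    exact BayesAux.q_to_bayes
      (BayesAux.q_trans hx hy hz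
        (BayesAux.bayes_to_q hx.1 hy.1 hxy) (BayesAux.bayes_to_q hy.1 hz.1 hyz))
end

section
/- For the Bayesian order on Δⁿ (n ≥ 2), the maximal elements are exactly the distributions x with spec(x) ⊆ {0,1}, i.e., the point masses eᵢ. -/
open Finset

/-- If a distribution has value 1 at `i0`, it vanishes elsewhere. -/
lemma rest_zero {n : ℕ} (g : Fin n → ℝ) (h0 : ∀ i, 0 ≤ g i) (hs : ∑ i, g i = 1)
    (i0 : Fin n) (h1 : g i0 = 1) : ∀ j, j ≠ i0 → g j = 0 := by
  have key : ∑ j ∈ univ.erase i0, g j = 0 := by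
    have := Finset.sum_erase_add univ g (mem_univ i0)
    rw [hs] at this; linarith
  intro j hj
  have := (Finset.sum_eq_zero_iff_of_nonneg (fun i _ => h0 i)).mp key j
    (Finset.mem_erase.mpr ⟨hj, mem_univ j⟩)
  exact this

/-- The maximal elements of (Δⁿ, ⊑) are exactly the point masses,
i.e. the distributions with spectrum contained in {0,1}. -/
theorem stmt5 {n : ℕ} (hn : 2 ≤ n) (x : Fin n → ℝ) (hx : IsDist x) :
    (∀ y : Fin n → ℝ, IsDist y → BayesLE x y → y = x) ↔
    (∀ i, x i = 0 ∨ x i = 1) := by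
  have h0n : 0 < n := by omega
  have h1n : 1 < n := by omega
  set z0 : Fin n := ⟨0, h0n⟩ with hz0
  constructor
  · -- maximal → point mass
    intro hmax
    -- sorting permutation making x ∘ σ antitone
    set σ : Equiv.Perm (Fin n) := Fin.revPerm.trans (Tuple.sort x) with hσ
    have hxanti : Antitone (x ∘ σ) := by
      have : (x ∘ σ) = (x ∘ Tuple.sort x) ∘ Fin.rev := rfl
      rw [this]
      exact (Tuple.monotone_sort x).comp_antitone (fun a b h => Fin.rev_le_rev.mpr h)
    set y : Fin n → ℝ := fun j => if j = σ z0 then 1 else 0 with hy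
    have hyσ : ∀ j, (y ∘ σ) j = if j = z0 then (1:ℝ) else 0 := by
      intro j; simp [hy, Equiv.apply_eq_iff_eq]
    have hydist : IsDist y := by
      constructor
      · intro i; simp only [hy]; split_ifs <;> norm_num
      · simp [hy]
    have hble : BayesLE x y := by
      refine ⟨σ, hxanti, ?_, ?_⟩
      · intro a b hab
        simp only [hyσ]
        split_ifs with hb ha
        · exact le_refl _
        · exact absurd (le_antisymm (hb ▸ hab) (show z0 ≤ a by simp [hz0, Fin.le_def])) ha
        · norm_num
        · exact le_refl _
      · intro i hi
        have : (⟨i+1, hi⟩ : Fin n) ≠ z0 := by simp [hz0, Fin.ext_iff]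
        rw [show (y ∘ σ) ⟨i+1, hi⟩ = 0 by rw [hyσ]; simp [this]]
        rw [mul_zero]
        exact mul_nonneg (hx.1 _) (by rw [hyσ]; split_ifs <;> norm_num)
    have hyx : y = x := hmax y hydist hble
    intro i
    rw [← hyx]
    simp only [hy]; split_ifs <;> [right; left] <;> rfl
  · -- point mass → maximal
    intro hspec y hy ⟨σ, hxa, hya, hadj⟩
    -- x ∘ σ at 0 is 1
    have hsx : ∑ j, (x ∘ σ) j = 1 := by
      rw [show ∑ j, (x ∘ σ) j = ∑ j, x (σ j) from rfl, Equiv.sum_comp σ x]; exact hx.2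
    have hx0 : (x ∘ σ) z0 = 1 := by
      rcases hspec (σ z0) with h | h
      · exfalso
        have hall : ∀ j, (x ∘ σ) j = 0 := by
          intro j
          have hle : (x ∘ σ) j ≤ (x ∘ σ) z0 := hxa (by simp [hz0, Fin.le_def])
          have := hx.1 (σ j)
          simp only [Function.comp_apply] at hle ⊢
          rw [h] at hle; linarith
        rw [Finset.sum_eq_zero (fun j _ => hall j)] at hsx; norm_num at hsx
      · exact h
    have hxrest : ∀ j, j ≠ z0 → (x ∘ σ) j = 0 :=
      rest_zero _ (fun i => hx.1 (σ i)) hsx z0 hx0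
    -- adjacent inequality at 0 forces (y ∘ σ) 1 = 0
    have h01 : (0:ℕ) + 1 < n := by omega
    have hadj0 := hadj 0 h01
    have hx1 : (x ∘ σ) ⟨1, h01⟩ = 0 := hxrest _ (by simp [hz0, Fin.ext_iff])
    have hy1 : (y ∘ σ) ⟨1, h01⟩ = 0 := by
      have h0eq : (⟨0, Nat.lt_of_succ_lt h01⟩ : Fin n) = z0 := rfl
      rw [hx1, zero_mul] at hadj0
      rw [h0eq, hx0, one_mul] at hadj0
      have := hy.1 (σ ⟨1, h01⟩)
      simp only [Function.comp_apply] at hadj0 ⊢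
      linarith
    have hyrest : ∀ j, j ≠ z0 → (y ∘ σ) j = 0 := by
      intro j hj
      have hle : (y ∘ σ) j ≤ (y ∘ σ) ⟨1, h01⟩ := by
        apply hya
        simp only [Fin.le_def]
        have : j.val ≠ 0 := fun h => hj (by simp [hz0, Fin.ext_iff, h])
        omega
      have := hy.1 (σ j)
      simp only [Function.comp_apply] at hle hy1 ⊢
      rw [hy1] at hle; linarith
    have hsy : ∑ j, (y ∘ σ) j = 1 := by
      rw [show ∑ j, (y ∘ σ) j = ∑ j, y (σ j) from rfl, Equiv.sum_comp σ y]; exact hy.2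
    have hy0 : (y ∘ σ) z0 = 1 := by
      rw [← hsy, Fintype.sum_eq_single z0 hyrest]
    funext i
    have : (y ∘ σ) (σ.symm i) = (x ∘ σ) (σ.symm i) := by
      by_cases h : σ.symm i = z0
      · rw [h, hy0, hx0]
      · rw [hyrest _ h, hxrest _ h]
    simpa using this
end

section
/- The uniform distribution (1/n,…,1/n) is the bottom element of Δⁿ with the Bayesian order: (1/n,…,1/n) ⊑ x for all x ∈ Δⁿ. -/
open Finset

/-- The uniform distribution (1/n,…,1/n) is the bottom of (Δⁿ, ⊑). -/
theorem stmt6 {n : ℕ} (hn : 2 ≤ n) (x : Fin n → ℝ) (hx : IsDist x) :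
    BayesLE (fun _ => (n : ℝ)⁻¹) x := by
  refine ⟨(Fin.revPerm).trans (Tuple.sort x), ?_, ?_, ?_⟩
  · intro a b _; exact le_refl _
  · have hmono : Monotone (x ∘ Tuple.sort x) := Tuple.monotone_sort x
    intro a b hab
    simpa using hmono (Fin.rev_le_rev.mpr hab)
  · intro i h
    have hmono : Monotone (x ∘ Tuple.sort x) := Tuple.monotone_sort x
    have h1 : (⟨i, Nat.lt_of_succ_lt h⟩ : Fin n) ≤ ⟨i+1, h⟩ := by
      simp [Fin.le_def]
    have : x ((Tuple.sort x) (Fin.rev ⟨i+1, h⟩)) ≤ x ((Tuple.sort x) (Fin.rev ⟨i, Nat.lt_of_succ_lt h⟩)) :=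
      hmono (Fin.rev_le_rev.mpr h1)
    have hn0 : (0:ℝ) ≤ (n : ℝ)⁻¹ := by positivity
    simpa using mul_le_mul_of_nonneg_left this hn0
end

section
/- (Degeneration Lemma) If x ⊑ y in the Bayesian order on Δⁿ, then for all indices i, j: (a) xᵢ = 0 implies yᵢ = 0, and (b) yᵢ = yⱼ > 0 implies xᵢ = xⱼ. -/
open Finset

/-!
After sorting by the common permutation σ, both u = x ∘ σ and v = y ∘ σ decrease, and the
adjacent inequality u_i v_{i+1} ≤ u_{i+1} v_i gives two local facts: u_{i+1} = 0 < u_i forces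
v_{i+1} = 0, and v_{i+1} = v_i > 0 forces u_{i+1} ≥ u_i, hence u_{i+1} = u_i. Monotonicity
spreads them along the chain: u is positive at the start (it sums to 1), and equal positive
values of v bound an interval on which v is constant.
-/

namespace AdjLE

variable {n : ℕ} {u v : Fin n → ℝ}

theorem succ_eq_of_succ_eq (hu : Antitone u) (hadj : AdjLE u v) {i : ℕ} (h : i + 1 < n)
    (hv : v ⟨i + 1, h⟩ = v ⟨i, Nat.lt_of_succ_lt h⟩) (hpos : 0 < v ⟨i, Nat.lt_of_succ_lt h⟩) :
    u ⟨i + 1, h⟩ = u ⟨i, Nat.lt_of_succ_lt h⟩ := by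
  have hle : u ⟨i, Nat.lt_of_succ_lt h⟩ ≤ u ⟨i + 1, h⟩ :=
    le_of_mul_le_mul_right (hv ▸ hadj i h) hpos
  exact le_antisymm (hu (Fin.mk_le_mk.mpr i.le_succ)) hle

theorem eq_zero_of_eq_zero (hu : Antitone u) (hv : Antitone v) (hv0 : ∀ k, 0 ≤ v k)
    (hadj : AdjLE u v) (hpos : ∃ j, 0 < u j) (k : Fin n) (hk : u k = 0) : v k = 0 := by
  suffices ∀ m (h : m < n), u ⟨m, h⟩ = 0 → v ⟨m, h⟩ = 0 from this k k.isLt hk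
  intro m
  induction m with
  | zero =>
    intro h h0
    obtain ⟨j, hj⟩ := hpos
    have : u j ≤ u ⟨0, h⟩ := hu (Fin.mk_le_mk.mpr j.val.zero_le)
    linarith
  | succ m ih =>
    intro h h0
    have hm : m < n := Nat.lt_of_succ_lt h
    have hv_succ_le : v ⟨m + 1, h⟩ ≤ v ⟨m, hm⟩ := hv (Fin.mk_le_mk.mpr m.le_succ)
    have hu_le : u ⟨m + 1, h⟩ ≤ u ⟨m, hm⟩ := hu (Fin.mk_le_mk.mpr m.le_succ)
    rcases eq_or_lt_of_le (h0 ▸ hu_le) with hum | hum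
    · linarith [ih hm hum.symm, hv0 ⟨m + 1, h⟩]
    · have hadj_m := hadj m h
      rw [h0, zero_mul] at hadj_m
      nlinarith [hv0 ⟨m + 1, h⟩]

theorem eq_of_le_of_eq (hu : Antitone u) (hv : Antitone v) (hadj : AdjLE u v) {a b : Fin n}
    (hab : a ≤ b) (hvab : v b = v a) (hpos : 0 < v a) : u b = u a := by
  suffices ∀ m, a.val ≤ m → ∀ h : m < n, v ⟨m, h⟩ = v a → u ⟨m, h⟩ = u a from
    this b hab b.isLt hvab
  intro m ham
  induction m, ham using Nat.le_induction with
  | base => intro _ _; rfl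
  | succ m ham ih =>
    intro h hvm
    have hm : m < n := Nat.lt_of_succ_lt h
    have hvm' : v ⟨m, hm⟩ = v a := le_antisymm (hv (Fin.mk_le_mk.mpr ham))
      (hvm ▸ hv (Fin.mk_le_mk.mpr m.le_succ))
    rw [succ_eq_of_succ_eq hu hadj h (hvm.trans hvm'.symm) (hvm' ▸ hpos), ih hm hvm']

theorem eq_of_eq (hu : Antitone u) (hv : Antitone v) (hadj : AdjLE u v) {a b : Fin n}
    (hvab : v a = v b) (hpos : 0 < v a) : u a = u b := by
  rcases le_total a b with hab | hba
  · exact (eq_of_le_of_eq hu hv hadj hab hvab.symm hpos).symm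
  · exact eq_of_le_of_eq hu hv hadj hba hvab (hvab ▸ hpos)

end AdjLE

/-- Degeneration Lemma: if x ⊑ y then zeroes of x are zeroes of y,
and a strictly positive degeneracy of y is a degeneracy of x. -/
theorem stmt7 {n : ℕ} (x y : Fin n → ℝ) (hx : IsDist x) (hy : IsDist y)
    (hxy : BayesLE x y) :
    (∀ i, x i = 0 → y i = 0) ∧
    (∀ i j, y i = y j → 0 < y i → x i = x j) := by
  obtain ⟨σ, hu, hv, hadj⟩ := hxy
  have hpos : ∃ j, 0 < (x ∘ σ) j := by
    obtain ⟨j, -, hj⟩ := exists_lt_of_sum_lt (s := univ) (f := 0) (g := x ∘ σ)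
      (by simp [Equiv.sum_comp σ x, hx.2])
    exact ⟨j, hj⟩
  refine ⟨fun i hi => ?_, fun i j hij hi => ?_⟩
  · simpa using hadj.eq_zero_of_eq_zero hu hv (fun k => hy.1 (σ k)) hpos (σ.symm i) (by simpa)
  · simpa using hadj.eq_of_eq hu hv (a := σ.symm i) (b := σ.symm j) (by simpa) (by simpa)
end

section
/- For x, y ∈ Δⁿ, x ⊑ y holds iff (1) there exists at least one σ ∈ S(n) with x·σ ∈ Λⁿ and y·σ ∈ Λⁿ, and (2) for all i ∈ {1,…,n-1}, x^Λᵢ · y^Λᵢ₊₁ ≤ x^Λᵢ₊₁ · y^Λᵢ, where x^Λ, y^Λ are the (canonical) monotone rearrangements of x and y respectively. -/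
open Finset

/-- Uniqueness of antitone rearrangements. -/
lemma unique_antitone {n : ℕ} {f : Fin n → ℝ} {σ τ : Equiv.Perm (Fin n)}
    (h1 : Antitone (f ∘ σ)) (h2 : Antitone (f ∘ τ)) : f ∘ σ = f ∘ τ := by
  have m1 : Monotone (f ∘ ⇑(Fin.revPerm.trans σ)) := by
    intro i j hij
    simp only [Equiv.coe_trans, Function.comp_apply, Fin.revPerm_apply]
    exact h1 (Fin.rev_le_rev.mpr hij)
  have m2 : Monotone (f ∘ ⇑(Fin.revPerm.trans τ)) := by
    intro i j hij
    simp only [Equiv.coe_trans, Function.comp_apply, Fin.revPerm_apply]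
    exact h2 (Fin.rev_le_rev.mpr hij)
  have := Tuple.unique_monotone m1 m2
  funext i
  have := congrFun this i.rev
  simpa using this

/-- x ⊑ y iff (1) x and y admit a joint monotonizing permutation and
(2) the adjacent inequalities hold between the monotone rearrangements
x^Λ and y^Λ (any monotonizations, since rearrangements are canonical). -/
theorem stmt8 {n : ℕ} (hn : 2 ≤ n) (x y : Fin n → ℝ)
    (hx : IsDist x) (hy : IsDist y) :
    BayesLE x y ↔
      ((∃ σ : Equiv.Perm (Fin n), Antitone (x ∘ σ) ∧ Antitone (y ∘ σ)) ∧
       (∀ σ τ : Equiv.Perm (Fin n), Antitone (x ∘ σ) → Antitone (y ∘ τ) →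
          AdjLE (x ∘ σ) (y ∘ τ))) := by
  constructor
  · rintro ⟨σ, hxσ, hyσ, hadj⟩
    refine ⟨⟨σ, hxσ, hyσ⟩, fun σ' τ' hx' hy' => ?_⟩
    have ex : x ∘ ⇑σ' = x ∘ ⇑σ := unique_antitone hx' hxσ
    have ey : y ∘ ⇑τ' = y ∘ ⇑σ := unique_antitone hy' hyσ
    rw [ex, ey]
    exact hadj
  · rintro ⟨⟨σ, hxσ, hyσ⟩, hall⟩
    exact ⟨σ, hxσ, hyσ, hall σ σ hxσ hyσ⟩
end

section
/- For x ∈ Δⁿ and σ ∈ S(n): x·σ ∈ Λⁿ if and only if for every j ∈ {1,…,n^x}, σ[Kⱼ] = Iⱼ, where n^x is the number of distinct values of x, Kⱼ are the consecutive index blocks of the decreasing rearrangement on which x^Λ takes its j-th largest value, and Iⱼ = {i : xᵢ equals the j-th largest value of x}. -/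
open Finset

/-- σ monotonizes x iff σ maps each block of the monotone rearrangement
(the indices where x^Λ takes a given value) onto the corresponding level
set of x.  Here x^Λ = x ∘ τ for some fixed monotonizing permutation τ. -/
theorem stmt9 {n : ℕ} (x : Fin n → ℝ) (hx : IsDist x)
    (τ : Equiv.Perm (Fin n)) (hτ : Antitone (x ∘ τ))
    (σ : Equiv.Perm (Fin n)) :
    Antitone (x ∘ σ) ↔
      ∀ v : ℝ, (σ : Fin n → Fin n) '' {i | x (τ i) = v} = {i | x i = v} := by
  constructor
  · intro hσ v
    have key : x ∘ σ = x ∘ τ := by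
      have h1 : Monotone ((fun i => -x i) ∘ σ) := fun a b hab => neg_le_neg (hσ hab)
      have h2 : Monotone ((fun i => -x i) ∘ τ) := fun a b hab => neg_le_neg (hτ hab)
      have := Tuple.unique_monotone h1 h2
      funext i
      have := congrFun this i
      simpa using this
    ext j
    constructor
    · rintro ⟨i, hi, rfl⟩
      show (x ∘ σ) i = v
      rw [key]; exact hi
    · intro hj
      refine ⟨σ⁻¹ j, ?_, by simp⟩
      have hv : x (σ (σ⁻¹ j)) = v := by simpa using hj
      show (x ∘ τ) (σ⁻¹ j) = v
      rw [← key]; exact hv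
  · intro h
    have key : ∀ i, x (σ i) = x (τ i) := by
      intro i
      have : σ i ∈ {j | x j = x (τ i)} := by
        rw [← h (x (τ i))]
        exact ⟨i, rfl, rfl⟩
      exact this
    intro a b hab
    simpa [Function.comp, key] using hτ hab
end

section
/- For x, y ∈ Δ^{n+1} (n ≥ 2): x ⊑ y if and only if for every i with xᵢ < 1 and yᵢ < 1, pᵢ(x) ⊑ pᵢ(y) in Δⁿ, where pᵢ is the i-th Bayesian projection. -/
/-!
Both sides reduce to a pairwise criterion: for nonnegative `x, y`, `x ⊑ y` iff any two indices
`a, b` are comparable, one of them (say `a`) satisfying `x b ≤ x a`, `y b ≤ y a` and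
`x a * y b ≤ x b * y a`. Along a monotonizing permutation the adjacent inequalities compose into
these cross inequalities, and conversely a lexicographic sort by `(x, y)` monotonizes both.
Comparability of `a, b` is unchanged by the positive rescaling in `p_c` for any `c ∉ {a, b}`, and
such a `c` exists because `n + 1 ≥ 3`; if `x c = 1` (or `y c = 1`) the pair is comparable anyway,
since then `x a = x b = 0`.
-/

open Finset

/-- The i-th Bayesian projection pᵢ : Δ^{n+1} → Δⁿ. -/
noncomputable def bproj {n : ℕ} (i : Fin (n + 1)) (x : Fin (n + 1) → ℝ) : Fin n → ℝ :=
  fun j => (1 - x i)⁻¹ * x (i.succAbove j)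

lemma cross_mul_le_trans {R : Type*} [CommRing R] [LinearOrder R] [IsStrictOrderedRing R]
    {a b a' b' a'' b'' : R} (ha : 0 ≤ a) (hb : 0 ≤ b)
    (ha'' : 0 ≤ a'') (hb'' : 0 ≤ b'') (haa : a'' ≤ a') (hbb : b'' ≤ b')
    (h₁ : a * b' ≤ a' * b) (h₂ : a' * b'' ≤ a'' * b') : a * b'' ≤ a'' * b := by
  have ha' : 0 ≤ a' := ha''.trans haa
  have hb' : 0 ≤ b' := hb''.trans hbb
  rcases (mul_nonneg ha' hb').eq_or_lt with h0 | hpos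
  · rcases mul_eq_zero.1 h0.symm with rfl | rfl
    · obtain rfl : a'' = 0 := le_antisymm haa ha''
      rcases mul_eq_zero.1 (le_antisymm (by simpa using h₁) (mul_nonneg ha hb')) with rfl | rfl
      · simp
      · simp [le_antisymm hbb hb'']
    · simp [le_antisymm hbb hb'', mul_nonneg ha'' hb]
  · refine le_of_mul_le_mul_left ?_ hpos
    nlinarith [mul_le_mul h₁ h₂ (mul_nonneg ha' hb'') (mul_nonneg ha' hb)]

lemma AdjLE.cross_le {n : ℕ} {u v : Fin n → ℝ} (hadj : AdjLE u v) (hu : Antitone u)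
    (hv : Antitone v) (hu0 : ∀ i, 0 ≤ u i) (hv0 : ∀ i, 0 ≤ v i) {k l : Fin n} (hkl : k ≤ l) :
    u k * v l ≤ u l * v k := by
  obtain ⟨k, hk⟩ := k
  obtain ⟨l, hl⟩ := l
  rw [Fin.mk_le_mk] at hkl
  induction l, hkl using Nat.le_induction with
  | base => rfl
  | succ m hkm ih =>
    have hm : (⟨m, by omega⟩ : Fin n) ≤ ⟨m + 1, hl⟩ := Fin.mk_le_mk.2 m.le_succ
    exact cross_mul_le_trans (hu0 _) (hv0 _) (hu0 _) (hv0 _) (hu hm) (hv hm) (ih _) (hadj m hl)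

/-- Index `a` may precede index `b` in a permutation witnessing `BayesLE x y`. -/
def BayesPrecedes {n : ℕ} (x y : Fin n → ℝ) (a b : Fin n) : Prop :=
  x b ≤ x a ∧ y b ≤ y a ∧ x a * y b ≤ x b * y a

lemma BayesLE.precedes_or {n : ℕ} {x y : Fin n → ℝ} (h : BayesLE x y)
    (hx0 : ∀ i, 0 ≤ x i) (hy0 : ∀ i, 0 ≤ y i) (a b : Fin n) :
    BayesPrecedes x y a b ∨ BayesPrecedes x y b a := by
  obtain ⟨σ, hxσ, hyσ, hadj⟩ := h
  have hprec : ∀ k l, k ≤ l → BayesPrecedes x y (σ k) (σ l) := fun k l hkl =>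
    ⟨hxσ hkl, hyσ hkl, hadj.cross_le hxσ hyσ (fun _ => hx0 _) (fun _ => hy0 _) hkl⟩
  rcases le_total (σ.symm a) (σ.symm b) with hab | hba
  · simpa using Or.inl (hprec _ _ hab)
  · simpa using Or.inr (hprec _ _ hba)

lemma bayesLE_of_forall_precedes_or {n : ℕ} {x y : Fin n → ℝ}
    (H : ∀ a b, BayesPrecedes x y a b ∨ BayesPrecedes x y b a) : BayesLE x y := by
  set σ := Tuple.sort fun j => OrderDual.toDual (toLex (x j, y j))
  have hlex : ∀ {k l}, k ≤ l →
      x (σ l) < x (σ k) ∨ x (σ l) = x (σ k) ∧ y (σ l) ≤ y (σ k) := fun hkl => by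
    simpa [Prod.Lex.le_iff] using
      Tuple.monotone_sort (fun j => OrderDual.toDual (toLex (x j, y j))) hkl
  have hxσ : Antitone (x ∘ σ) := fun _ _ hkl =>
    (hlex hkl).elim le_of_lt fun h => h.1.le
  have hyσ : Antitone (y ∘ σ) := fun k l hkl => by
    rcases hlex hkl with hlt | ⟨-, h⟩
    · rcases H (σ k) (σ l) with ⟨-, h, -⟩ | ⟨h, -, -⟩
      · exact h
      · exact absurd h hlt.not_ge
    · exact h
  refine ⟨σ, hxσ, hyσ, fun i hi => ?_⟩
  have hle : (⟨i, by omega⟩ : Fin n) ≤ ⟨i + 1, hi⟩ := Fin.mk_le_mk.2 i.le_succ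
  rcases H (σ ⟨i, by omega⟩) (σ ⟨i + 1, hi⟩) with ⟨-, -, h⟩ | ⟨hx, hy, -⟩
  · exact h
  · simp only [Function.comp, le_antisymm hx (hxσ hle), le_antisymm hy (hyσ hle), le_refl]

section Projection

variable {n : ℕ} {i : Fin (n + 1)} {x y : Fin (n + 1) → ℝ}

lemma bproj_nonneg (hxi : x i < 1) (hx0 : ∀ j, 0 ≤ x j) (j : Fin n) : 0 ≤ bproj i x j :=
  mul_nonneg (inv_nonneg.2 (by linarith)) (hx0 _)

lemma bayesPrecedes_bproj_iff (hxi : x i < 1) (hyi : y i < 1) {a b : Fin n} :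
    BayesPrecedes (bproj i x) (bproj i y) a b ↔
      BayesPrecedes x y (i.succAbove a) (i.succAbove b) := by
  have hcx : 0 < (1 - x i)⁻¹ := inv_pos.2 (by linarith)
  have hcy : 0 < (1 - y i)⁻¹ := inv_pos.2 (by linarith)
  simp only [BayesPrecedes, bproj, mul_mul_mul_comm _ (x _), mul_le_mul_iff_right₀ hcx,
    mul_le_mul_iff_right₀ hcy, mul_le_mul_iff_right₀ (mul_pos hcx hcy)]

lemma BayesLE.bproj (h : BayesLE x y) (hx0 : ∀ j, 0 ≤ x j) (hy0 : ∀ j, 0 ≤ y j)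
    (hxi : x i < 1) (hyi : y i < 1) : BayesLE (bproj i x) (bproj i y) :=
  bayesLE_of_forall_precedes_or fun a b => by
    simpa only [bayesPrecedes_bproj_iff hxi hyi] using
      h.precedes_or hx0 hy0 (i.succAbove a) (i.succAbove b)

end Projection

lemma IsDist.le_one {n : ℕ} {x : Fin n → ℝ} (hx : IsDist x) (c : Fin n) : x c ≤ 1 :=
  hx.2 ▸ Finset.single_le_sum (fun j _ => hx.1 j) (Finset.mem_univ c)

lemma IsDist.eq_zero_of_eq_one {n : ℕ} {x : Fin n → ℝ} (hx : IsDist x) {a c : Fin n}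
    (hc : x c = 1) (hac : a ≠ c) : x a = 0 := by
  have hpair : x a + x c ≤ 1 := by
    simpa [Finset.sum_pair hac, hx.2] using
      Finset.sum_le_sum_of_subset_of_nonneg (Finset.subset_univ {a, c}) fun j _ _ => hx.1 j
  linarith [hx.1 a]

lemma bayesPrecedes_or_of_left_eq_zero {n : ℕ} {x y : Fin n → ℝ} {a b : Fin n}
    (ha : x a = 0) (hb : x b = 0) : BayesPrecedes x y a b ∨ BayesPrecedes x y b a := by
  simp only [BayesPrecedes, ha, hb, le_refl, zero_mul, true_and, and_true]
  exact le_total _ _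

lemma bayesPrecedes_or_of_right_eq_zero {n : ℕ} {x y : Fin n → ℝ} {a b : Fin n}
    (ha : y a = 0) (hb : y b = 0) : BayesPrecedes x y a b ∨ BayesPrecedes x y b a := by
  simp only [BayesPrecedes, ha, hb, le_refl, mul_zero, and_true]
  exact le_total _ _

lemma IsDist.bayesPrecedes_or_of_bproj {n : ℕ} {x y : Fin (n + 1) → ℝ} (hx : IsDist x)
    (hy : IsDist y) {a b c : Fin (n + 1)} (hca : c ≠ a) (hcb : c ≠ b)
    (h : x c < 1 → y c < 1 → BayesLE (bproj c x) (bproj c y)) :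
    BayesPrecedes x y a b ∨ BayesPrecedes x y b a := by
  rcases (hx.le_one c).lt_or_eq with hxc | hxc
  swap
  · exact bayesPrecedes_or_of_left_eq_zero (hx.eq_zero_of_eq_one hxc hca.symm)
      (hx.eq_zero_of_eq_one hxc hcb.symm)
  rcases (hy.le_one c).lt_or_eq with hyc | hyc
  swap
  · exact bayesPrecedes_or_of_right_eq_zero (hy.eq_zero_of_eq_one hyc hca.symm)
      (hy.eq_zero_of_eq_one hyc hcb.symm)
  obtain ⟨a', rfl⟩ := Fin.exists_succAbove_eq hca.symm
  obtain ⟨b', rfl⟩ := Fin.exists_succAbove_eq hcb.symm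
  simpa only [bayesPrecedes_bproj_iff hxc hyc] using
    (h hxc hyc).precedes_or (bproj_nonneg hxc hx.1) (bproj_nonneg hyc hy.1) a' b'

lemma Fintype.exists_ne_and_ne_of_two_lt_card {α : Type*} [Fintype α] [DecidableEq α]
    (h : 2 < Fintype.card α) (a b : α) : ∃ c, c ≠ a ∧ c ≠ b := by
  obtain ⟨c, -, hc⟩ := Finset.exists_mem_notMem_of_card_lt_card (s := {a, b})
    (t := Finset.univ) (Finset.card_le_two.trans_lt h)
  exact ⟨c, by simpa [not_or] using hc⟩

/-- Inductive rule: for x, y ∈ Δ^{n+1} (n ≥ 2),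
x ⊑ y iff pᵢ(x) ⊑ pᵢ(y) whenever xᵢ < 1 and yᵢ < 1. -/
theorem stmt11 {n : ℕ} (hn : 2 ≤ n) (x y : Fin (n + 1) → ℝ)
    (hx : IsDist x) (hy : IsDist y) :
    BayesLE x y ↔
      ∀ i : Fin (n + 1), x i < 1 → y i < 1 → BayesLE (bproj i x) (bproj i y) := by
  refine ⟨fun h i => h.bproj hx.1 hy.1, fun h => bayesLE_of_forall_precedes_or fun a b => ?_⟩
  obtain ⟨c, hca, hcb⟩ := Fintype.exists_ne_and_ne_of_two_lt_card
    (by rw [Fintype.card_fin]; omega) a b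
  exact hx.bayesPrecedes_or_of_bproj hy hca hcb (h c)
end

section
/- For x ∈ Δⁿ with at most binary spectrum and 0 ∉ spec(x) and x ≠ ⊥ (i.e., x ∈ Coord_Ir(Δⁿ)), the down-set ↓x = {y ∈ Δⁿ : y ⊑ x} is a chain in the Bayesian order. -/
open Finset

lemma blockAnti {n k : ℕ} {c d : ℝ} (h : d ≤ c) :
    Antitone (fun i : Fin n => if (i : ℕ) < k then c else d) := by
  intro i j hij
  by_cases hj : (j : ℕ) < k
  · have hi : (i : ℕ) < k := lt_of_le_of_lt (by exact_mod_cast hij) hj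
    simp [hi, hj]
  · by_cases hi : (i : ℕ) < k <;> simp [hi, hj, h]

lemma blockAdj {n k : ℕ} {c d e f : ℝ} (hj : c * f ≤ d * e) :
    AdjLE (fun i : Fin n => if (i : ℕ) < k then c else d)
          (fun i : Fin n => if (i : ℕ) < k then e else f) := by
  intro i h
  simp only
  by_cases h1 : i + 1 < k
  · have h0 : i < k := Nat.lt_of_succ_lt h1
    simp [h0, h1]
  · by_cases h0 : i < k
    · simp [h0, h1, hj]
    · simp [h0, h1]

lemma sortChar {n : ℕ} (x : Fin n → ℝ) (a b : ℝ) (hab : b < a)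
    (hx2 : ∀ j, x j = a ∨ x j = b) (σ : Equiv.Perm (Fin n))
    (hσ : Antitone (x ∘ σ)) (i : Fin n) :
    x (σ i) = a ↔ (i : ℕ) < (univ.filter fun j => x j = a).card := by
  set S : Finset (Fin n) := univ.filter (fun p => x (σ p) = a) with hS
  have hmem : ∀ p : Fin n, p ∈ S ↔ x (σ p) = a := by
    intro p; simp [hS]
  have hcard : S.card = (univ.filter fun j => x j = a).card := by
    have himg : (univ.filter fun j => x j = a) = S.image σ := by
      ext j
      simp only [Finset.mem_image, Finset.mem_filter, Finset.mem_univ, true_and]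
      constructor
      · intro hj
        exact ⟨σ⁻¹ j, by simp [hS, hj], by simp⟩
      · rintro ⟨p, hp, rfl⟩
        exact (hmem p).mp hp
    rw [himg, Finset.card_image_of_injective _ σ.injective]
  have hdown : ∀ p q : Fin n, p ≤ q → q ∈ S → p ∈ S := by
    intro p q hpq hq
    rw [hmem] at hq ⊢
    rcases hx2 (σ p) with h | h
    · exact h
    · exfalso
      have h2 : x (σ q) ≤ x (σ p) := hσ hpq
      rw [hq, h] at h2
      exact absurd h2 (not_le.mpr hab)
  rw [← hmem, ← hcard]
  constructor
  · intro hi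
    have hsub : Finset.Iic i ⊆ S := fun j hj => hdown j i (Finset.mem_Iic.mp hj) hi
    have h1 := Finset.card_le_card hsub
    rw [Fin.card_Iic] at h1
    omega
  · intro hi
    by_contra hxi
    have hsub : S ⊆ Finset.Iio i := by
      intro j hj
      rw [Finset.mem_Iio]
      by_contra hle
      exact hxi (hdown i j (not_lt.mp hle) hj)
    have h1 := Finset.card_le_card hsub
    rw [Fin.card_Iio] at h1
    omega

lemma constOnBlocks {n : ℕ} (x y : Fin n → ℝ) (a b : ℝ)
    (hb : 0 < b) (hab : b < a) (hx2 : ∀ j, x j = a ∨ x j = b)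
    (hea : ∃ j, x j = a) (heb : ∃ j, x j = b)
    (σ : Equiv.Perm (Fin n)) (hyσ : Antitone (y ∘ σ)) (hxσ : Antitone (x ∘ σ))
    (hadj : AdjLE (y ∘ σ) (x ∘ σ)) :
    ∃ c d : ℝ, d ≤ c ∧ (∀ j, x j = a → y j = c) ∧ (∀ j, x j = b → y j = d) := by
  set k := (univ.filter fun j => x j = a).card with hk
  have hchar : ∀ i : Fin n, x (σ i) = a ↔ (i : ℕ) < k :=
    sortChar x a b hab hx2 σ hxσ
  obtain ⟨ja, hja⟩ := hea
  obtain ⟨jb, hjb⟩ := heb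
  have hkpos : 0 < k := by
    have := (hchar (σ⁻¹ ja)).mp (by simp [hja])
    omega
  have hkn : k < n := by
    have h1 : ¬ ((σ⁻¹ jb : Fin n) : ℕ) < k := by
      intro hlt
      have := (hchar (σ⁻¹ jb)).mpr hlt
      simp [hjb] at this
      exact absurd this (ne_of_lt hab)
    have := (σ⁻¹ jb).isLt
    omega
  have hadjeq : ∀ i : ℕ, ∀ h : i + 1 < n,
      x (σ ⟨i, Nat.lt_of_succ_lt h⟩) = x (σ ⟨i + 1, h⟩) →
      y (σ ⟨i, Nat.lt_of_succ_lt h⟩) = y (σ ⟨i + 1, h⟩) := by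
    intro i h heq
    have hv : 0 < x (σ ⟨i, Nat.lt_of_succ_lt h⟩) := by
      rcases hx2 (σ ⟨i, Nat.lt_of_succ_lt h⟩) with hh | hh <;> rw [hh]
      · exact lt_trans hb hab
      · exact hb
    have hle := hadj i h
    simp only [Function.comp] at hle
    rw [← heq] at hle
    have h1 : y (σ ⟨i, Nat.lt_of_succ_lt h⟩) ≤ y (σ ⟨i + 1, h⟩) :=
      le_of_mul_le_mul_right hle hv
    have h2 : y (σ ⟨i + 1, h⟩) ≤ y (σ ⟨i, Nat.lt_of_succ_lt h⟩) :=
      hyσ (show (⟨i, Nat.lt_of_succ_lt h⟩ : Fin n) ≤ ⟨i + 1, h⟩ by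
        simp [Fin.le_def])
    linarith
  have h0n : 0 < n := lt_trans hkpos hkn
  refine ⟨y (σ ⟨0, h0n⟩), y (σ ⟨k, hkn⟩), ?_, ?_, ?_⟩
  · exact hyσ (show (⟨0, h0n⟩ : Fin n) ≤ ⟨k, hkn⟩ by simp [Fin.le_def])
  · -- block a
    have hblock : ∀ m : ℕ, ∀ h : m < n, m < k → y (σ ⟨m, h⟩) = y (σ ⟨0, h0n⟩) := by
      intro m
      induction m with
      | zero => intro h _; rfl
      | succ m ih =>
        intro h hmk
        have hm : m < k := Nat.lt_of_succ_lt hmk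
        have hxm : x (σ ⟨m, Nat.lt_of_succ_lt h⟩) = a := (hchar _).mpr hm
        have hxm1 : x (σ ⟨m + 1, h⟩) = a := (hchar _).mpr hmk
        rw [← hadjeq m h (by rw [hxm, hxm1])]
        exact ih (Nat.lt_of_succ_lt h) hm
    intro j hja'
    have hi : ((σ⁻¹ j : Fin n) : ℕ) < k := (hchar _).mp (by simp [hja'])
    have := hblock (σ⁻¹ j) (σ⁻¹ j).isLt hi
    simpa using this
  · -- block b
    have hblock : ∀ m : ℕ, k ≤ m → ∀ h : m < n, y (σ ⟨m, h⟩) = y (σ ⟨k, hkn⟩) := by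
      intro m hm
      induction m, hm using Nat.le_induction with
      | base => intro h; rfl
      | succ m hm ih =>
        intro h
        have hxm : x (σ ⟨m, Nat.lt_of_succ_lt h⟩) = b := by
          rcases hx2 (σ ⟨m, Nat.lt_of_succ_lt h⟩) with hh | hh
          · have := (hchar _).mp hh
            simp at this
            omega
          · exact hh
        have hxm1 : x (σ ⟨m + 1, h⟩) = b := by
          rcases hx2 (σ ⟨m + 1, h⟩) with hh | hh
          · have := (hchar _).mp hh
            simp at this
            omega
          · exact hh
        rw [← hadjeq m h (by rw [hxm, hxm1])]
        exact ih (Nat.lt_of_succ_lt h)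
    intro j hjb'
    have hi : ¬ ((σ⁻¹ j : Fin n) : ℕ) < k := by
      intro hlt
      have := (hchar (σ⁻¹ j)).mpr hlt
      simp [hjb'] at this
      exact absurd this (ne_of_lt hab)
    have := hblock (σ⁻¹ j) (not_lt.mp hi) (σ⁻¹ j).isLt
    simpa using this

/-- For a coordinate x ∈ Coord_Ir(Δⁿ) (at most binary spectrum, 0 ∉ spec(x),
x ≠ ⊥), the down-set ↓x is a chain in the Bayesian order. -/
theorem stmt12 {n : ℕ} (hn : 2 ≤ n) (x : Fin n → ℝ) (hx : IsDist x)
    (hspec : (Finset.univ.image x).card ≤ 2)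
    (h0 : (0 : ℝ) ∉ Finset.univ.image x)
    (hbot : x ≠ fun _ => (n : ℝ)⁻¹) :
    ∀ y z : Fin n → ℝ, IsDist y → IsDist z → BayesLE y x → BayesLE z x →
      BayesLE y z ∨ BayesLE z y := by
  have h0n : 0 < n := by omega
  -- extract the two values a > b > 0
  have hmem : ∀ j, x j ∈ univ.image x := fun j => Finset.mem_image_of_mem x (Finset.mem_univ j)
  have hne : (univ.image x).Nonempty := ⟨x ⟨0, h0n⟩, hmem _⟩
  have hcard : (univ.image x).card = 1 ∨ (univ.image x).card = 2 := by
    have := Finset.Nonempty.card_pos hne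
    omega
  have habs : ∃ a b : ℝ, b < a ∧ 0 < b ∧ (∀ j, x j = a ∨ x j = b) ∧
      (∃ j, x j = a) ∧ (∃ j, x j = b) := by
    rcases hcard with h1 | h2
    · exfalso
      obtain ⟨v, hv⟩ := Finset.card_eq_one.mp h1
      have hconst : ∀ j, x j = v := by
        intro j
        have := hmem j
        rw [hv, Finset.mem_singleton] at this
        exact this
      have hsum : (n : ℝ) * v = 1 := by
        have := hx.2
        rw [Finset.sum_congr rfl (fun j _ => hconst j)] at this
        simpa [Finset.card_univ, mul_comm] using this
      have hv' : v = (n : ℝ)⁻¹ := by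
        field_simp at hsum ⊢
        linarith
      exact hbot (funext fun j => by rw [hconst j, hv'])
    · obtain ⟨a, b, hab, hs⟩ := Finset.card_eq_two.mp h2
      have hval : ∀ j, x j = a ∨ x j = b := by
        intro j
        have := hmem j
        rw [hs] at this
        simpa using this
      have hexa : ∃ j, x j = a := by
        have : a ∈ univ.image x := by rw [hs]; simp
        obtain ⟨j, _, hj⟩ := Finset.mem_image.mp this
        exact ⟨j, hj⟩
      have hexb : ∃ j, x j = b := by
        have : b ∈ univ.image x := by rw [hs]; simp
        obtain ⟨j, _, hj⟩ := Finset.mem_image.mp this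
        exact ⟨j, hj⟩
      have hposmem : ∀ v : ℝ, v ∈ univ.image x → 0 < v := by
        intro v hv
        obtain ⟨j, _, hj⟩ := Finset.mem_image.mp hv
        rcases lt_or_eq_of_le (hx.1 j) with h | h
        · rw [← hj]; exact h
        · exfalso
          exact h0 (by rw [h]; exact hmem j)
      have hain : a ∈ univ.image x := by rw [hs]; simp
      have hbin : b ∈ univ.image x := by rw [hs]; simp
      rcases lt_or_gt_of_ne hab with h | h
      · exact ⟨b, a, h, hposmem a hain, fun j => (hval j).symm, hexb, hexa⟩
      · exact ⟨a, b, h, hposmem b hbin, hval, hexa, hexb⟩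
  obtain ⟨a, b, hab, hb, hx2, hea, heb⟩ := habs
  intro y z hy hz hyx hzx
  obtain ⟨σ, hyσ, hxσ, hadjy⟩ := hyx
  obtain ⟨τ, hzτ, hxτ, hadjz⟩ := hzx
  obtain ⟨c, d, hdc, hca, hdb⟩ :=
    constOnBlocks x y a b hb hab hx2 hea heb σ hyσ hxσ hadjy
  obtain ⟨e, f, hfe, hec, hfd⟩ :=
    constOnBlocks x z a b hb hab hx2 hea heb τ hzτ hxτ hadjz
  set k := (univ.filter fun j => x j = a).card with hk
  have hchar : ∀ i : Fin n, x (σ i) = a ↔ (i : ℕ) < k :=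
    sortChar x a b hab hx2 σ hxσ
  have hyform : y ∘ σ = fun i : Fin n => if (i : ℕ) < k then c else d := by
    funext i
    rcases hx2 (σ i) with h | h
    · have hi := (hchar i).mp h
      simp [Function.comp, hca _ h, hi]
    · have hi : ¬ (i : ℕ) < k := by
        intro hlt
        have := (hchar i).mpr hlt
        rw [this] at h
        exact absurd h (ne_of_gt hab)
      simp [Function.comp, hdb _ h, hi]
  have hzform : z ∘ σ = fun i : Fin n => if (i : ℕ) < k then e else f := by
    funext i
    rcases hx2 (σ i) with h | h
    · have hi := (hchar i).mp h
      simp [Function.comp, hec _ h, hi]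
    · have hi : ¬ (i : ℕ) < k := by
        intro hlt
        have := (hchar i).mpr hlt
        rw [this] at h
        exact absurd h (ne_of_gt hab)
      simp [Function.comp, hfd _ h, hi]
  rcases le_total (c * f) (d * e) with hcf | hcf
  · left
    exact ⟨σ, by rw [hyform]; exact blockAnti hdc,
      by rw [hzform]; exact blockAnti hfe,
      by rw [hyform, hzform]; exact blockAdj hcf⟩
  · right
    have hcf' : e * d ≤ f * c := by
      rw [mul_comm e d, mul_comm f c]
      exact hcf
    exact ⟨σ, by rw [hzform]; exact blockAnti hfe,
      by rw [hyform]; exact blockAnti hdc,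
      by rw [hzform, hyform]; exact blockAdj hcf'⟩
end

section
/- For x ∈ Δⁿ, if the down-set ↓x = {y : y ⊑ x} is a chain in the Bayesian order, then x has at most binary spectrum, i.e., x ∈ Coord(Δⁿ). -/
/-!
Sort `x` decreasingly, `w = x ∘ σ`. If `x` takes at least three values, `w` strictly descends
at two positions `i < j`. Flattening `w` everywhere except at `i` (resp. `j`) gives two-level
distributions `u, v ⊑ x`. Since a decreasing rearrangement is unique, comparing `u` and `v` in the
Bayesian order means checking the adjacent inequalities in sorted coordinates, and these fail at
`i` for `u ⊑ v` (where `v` is flat and `u` is not) and at `j` for `v ⊑ u`.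
-/

open Finset

theorem IsDist.comp_perm {n : ℕ} {x : Fin n → ℝ} (hx : IsDist x) (σ : Equiv.Perm (Fin n)) :
    IsDist (x ∘ σ) :=
  ⟨fun i => hx.1 (σ i), (Equiv.sum_comp σ x).trans hx.2⟩

theorem exists_perm_antitone_comp {α : Type*} [LinearOrder α] {n : ℕ} (x : Fin n → α) :
    ∃ σ : Equiv.Perm (Fin n), Antitone (x ∘ σ) :=
  ⟨Fin.revPerm.trans (Tuple.sort x), fun _ _ hk => Tuple.monotone_sort x (Fin.rev_le_rev.mpr hk)⟩

theorem bayesLE_iff_adjLE {n : ℕ} {y z : Fin n → ℝ} {σ : Equiv.Perm (Fin n)}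
    (hy : Antitone (y ∘ σ)) (hz : Antitone (z ∘ σ)) :
    BayesLE y z ↔ AdjLE (y ∘ σ) (z ∘ σ) := by
  refine ⟨fun ⟨τ, hyτ, hzτ, hadj⟩ => ?_, fun h => ⟨σ, hy, hz, h⟩⟩
  -- a decreasing rearrangement is unique
  have hy' : y ∘ τ = y ∘ σ := Tuple.unique_monotone (f := OrderDual.toDual ∘ y) hyτ hy
  have hz' : z ∘ τ = z ∘ σ := Tuple.unique_monotone (f := OrderDual.toDual ∘ z) hzτ hz
  rwa [← hy', ← hz']

theorem bayesLE_comp_symm_iff {n : ℕ} {u v : Fin n → ℝ} (σ : Equiv.Perm (Fin n))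
    (hu : Antitone u) (hv : Antitone v) :
    BayesLE (u ∘ σ.symm) (v ∘ σ.symm) ↔ AdjLE u v := by
  rw [bayesLE_iff_adjLE (σ := σ)] <;>
    simp only [Function.comp_assoc, Equiv.symm_comp_self, Function.comp_id, hu, hv]

theorem exists_descent_between {α : Type*} [LinearOrder α] {n : ℕ} (w : Fin n → α) {p q : ℕ}
    (hpq : p ≤ q) (hq : q < n) (hlt : w ⟨q, hq⟩ < w ⟨p, hpq.trans_lt hq⟩) :
    ∃ i, ∃ hi : i + 1 < n, p ≤ i ∧ i < q ∧ w ⟨i + 1, hi⟩ < w ⟨i, Nat.lt_of_succ_lt hi⟩ := by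
  induction q, hpq using Nat.le_induction with
  | base => exact absurd hlt (lt_irrefl _)
  | succ q hpq ih =>
    by_cases hdesc : w ⟨q + 1, hq⟩ < w ⟨q, Nat.lt_of_succ_lt hq⟩
    · exact ⟨q, hq, hpq, q.lt_add_one, hdesc⟩
    · obtain ⟨i, hi, hpi, hiq, hdesc'⟩ := ih (Nat.lt_of_succ_lt hq) ((not_lt.mp hdesc).trans_lt hlt)
      exact ⟨i, hi, hpi, hiq.trans q.lt_add_one, hdesc'⟩

theorem exists_two_descents_of_two_lt_card {α : Type*} [LinearOrder α] {n : ℕ} {w : Fin n → α}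
    (hw : Antitone w) (hcard : 2 < #(univ.image w)) :
    ∃ i j, ∃ (hi : i + 1 < n) (hj : j + 1 < n), i < j ∧
      w ⟨i + 1, hi⟩ < w ⟨i, Nat.lt_of_succ_lt hi⟩ ∧
      w ⟨j + 1, hj⟩ < w ⟨j, Nat.lt_of_succ_lt hj⟩ := by
  cases n with
  | zero => simp at hcard
  | succ m =>
    obtain ⟨q, hq0, hqm⟩ : ∃ q, w q ≠ w 0 ∧ w q ≠ w (Fin.last m) := by
      by_contra! h
      have hsub : univ.image w ⊆ {w 0, w (Fin.last m)} := by
        intro v hv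
        obtain ⟨k, -, rfl⟩ := mem_image.mp hv
        simp only [mem_insert, mem_singleton]
        exact or_iff_not_imp_left.mpr (h k)
      exact (card_le_card hsub).trans card_le_two |>.not_gt hcard
    obtain ⟨i, hi, -, hiq, hdi⟩ :=
      exists_descent_between w (Nat.zero_le q) q.isLt (lt_of_le_of_ne (hw (Fin.zero_le q)) hq0)
    obtain ⟨j, hj, hqj, -, hdj⟩ :=
      exists_descent_between w q.is_le (Nat.lt_succ_self m)
        (lt_of_le_of_ne (hw (Fin.le_last q)) (Ne.symm hqm))
    exact ⟨i, j, hi, hj, hiq.trans_le hqj, hdi, hdj⟩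

theorem not_adjLE_of_lt_of_eq {n i : ℕ} (hi : i + 1 < n) {u v : Fin n → ℝ}
    (hu : u ⟨i + 1, hi⟩ < u ⟨i, Nat.lt_of_succ_lt hi⟩)
    (hv : v ⟨i + 1, hi⟩ = v ⟨i, Nat.lt_of_succ_lt hi⟩)
    (hv0 : 0 < v ⟨i, Nat.lt_of_succ_lt hi⟩) : ¬AdjLE u v := fun h =>
  (mul_lt_mul_of_pos_right hu hv0).not_ge (hv ▸ h i hi)

theorem adjLE_of_succ_eq_of_ne {n i : ℕ} {u w : Fin n → ℝ} (hw : Antitone w) (hu : ∀ k, 0 ≤ u k)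
    (hflat : ∀ k (hk : k + 1 < n), k ≠ i → u ⟨k + 1, hk⟩ = u ⟨k, Nat.lt_of_succ_lt hk⟩)
    (hi : ∀ hi : i + 1 < n,
      u ⟨i, Nat.lt_of_succ_lt hi⟩ * w ⟨i + 1, hi⟩ ≤ u ⟨i + 1, hi⟩ * w ⟨i, Nat.lt_of_succ_lt hi⟩) :
    AdjLE u w := by
  intro k hk
  rcases eq_or_ne k i with rfl | hki
  · exact hi hk
  · rw [hflat k hk hki]
    exact mul_le_mul_of_nonneg_left (hw (Fin.mk_le_mk.mpr k.le_succ)) (hu _)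

theorem exists_isDist_adjLE_descending_only_at {n i : ℕ} {w : Fin n → ℝ} (hw : Antitone w)
    (hw0 : ∀ k, 0 ≤ w k) (hi : i + 1 < n) (hdesc : w ⟨i + 1, hi⟩ < w ⟨i, Nat.lt_of_succ_lt hi⟩) :
    ∃ u : Fin n → ℝ, IsDist u ∧ (∀ k, 0 < u k) ∧ Antitone u ∧ AdjLE u w ∧
      u ⟨i + 1, hi⟩ < u ⟨i, Nat.lt_of_succ_lt hi⟩ ∧
      ∀ k (hk : k + 1 < n), k ≠ i → u ⟨k + 1, hk⟩ = u ⟨k, Nat.lt_of_succ_lt hk⟩ := by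
  set a := w ⟨i, Nat.lt_of_succ_lt hi⟩
  -- `b / a ∈ [w (i+1) / w i, 1)` is what `u ⊑ w` with a strict descent of `u` at `i` needs
  set b := (a + w ⟨i + 1, hi⟩) / 2 with hb_def
  have hb : 0 < b := by linarith [hw0 ⟨i + 1, hi⟩]
  have hba : b < a := by linarith
  set f : Fin n → ℝ := fun k => if (k : ℕ) ≤ i then a else b
  have hf : ∀ k, 0 < f k := fun k => by simp only [f]; split_ifs <;> linarith
  set S := ∑ k, f k
  have hS : 0 < S := sum_pos (fun k _ => hf k) ⟨⟨0, by omega⟩, mem_univ _⟩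
  set u : Fin n → ℝ := fun k => f k / S
  have hpos : ∀ k, 0 < u k := fun k => div_pos (hf k) hS
  have hflat : ∀ k (hk : k + 1 < n), k ≠ i → u ⟨k + 1, hk⟩ = u ⟨k, Nat.lt_of_succ_lt hk⟩ := by
    intro k hk hki
    simp only [u, f]
    split_ifs <;> first | rfl | omega
  have hu_desc : u ⟨i + 1, hi⟩ < u ⟨i, Nat.lt_of_succ_lt hi⟩ := by
    simpa [u, f] using div_lt_div_of_pos_right hba hS
  refine ⟨u, ⟨fun k => (hpos k).le, by rw [← sum_div, div_self hS.ne']⟩, hpos, ?_, ?_, hu_desc,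
    hflat⟩
  · intro k l hkl
    have hkl' : (k : ℕ) ≤ l := hkl
    apply div_le_div_of_nonneg_right _ hS.le
    simp only [f]
    split_ifs <;> first | exact le_rfl | exact hba.le | omega
  · refine adjLE_of_succ_eq_of_ne hw (fun k => (hpos k).le) hflat fun _ => ?_
    simp only [u, f, le_refl, if_true, show ¬i + 1 ≤ i by omega, if_false]
    rw [div_mul_eq_mul_div, div_mul_eq_mul_div]
    apply div_le_div_of_nonneg_right _ hS.le
    nlinarith [mul_le_mul_of_nonneg_left hdesc.le (hw0 ⟨i, Nat.lt_of_succ_lt hi⟩)]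

theorem stmt13_general {n : ℕ} (x : Fin n → ℝ) (hx : IsDist x)
    (hchain : ∀ y z : Fin n → ℝ, IsDist y → IsDist z →
      BayesLE y x → BayesLE z x → BayesLE y z ∨ BayesLE z y) :
    (Finset.univ.image x).card ≤ 2 := by
  by_contra! hcard
  obtain ⟨σ, hw⟩ := exists_perm_antitone_comp x
  have hx_eq : x = (x ∘ σ) ∘ σ.symm := by ext; simp
  rw [hx_eq, image_comp, image_univ_equiv] at hcard
  obtain ⟨i, j, hi, hj, hij, hdi, hdj⟩ := exists_two_descents_of_two_lt_card hw hcard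
  obtain ⟨u, hu, hu0, hu_anti, hux, hu_desc, hu_flat⟩ :=
    exists_isDist_adjLE_descending_only_at hw (hx.comp_perm σ).1 hi hdi
  obtain ⟨v, hv, hv0, hv_anti, hvx, hv_desc, hv_flat⟩ :=
    exists_isDist_adjLE_descending_only_at hw (hx.comp_perm σ).1 hj hdj
  have hux' := (bayesLE_comp_symm_iff σ hu_anti hw).mpr hux
  have hvx' := (bayesLE_comp_symm_iff σ hv_anti hw).mpr hvx
  rw [← hx_eq] at hux' hvx'
  rcases hchain _ _ (hu.comp_perm _) (hv.comp_perm _) hux' hvx' with huv | hvu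
  · exact not_adjLE_of_lt_of_eq hi hu_desc (hv_flat i hi hij.ne) (hv0 _)
      ((bayesLE_comp_symm_iff σ hu_anti hv_anti).mp huv)
  · exact not_adjLE_of_lt_of_eq hj hv_desc (hu_flat j hj hij.ne') (hu0 _)
      ((bayesLE_comp_symm_iff σ hv_anti hu_anti).mp hvu)

/-- If the down-set ↓x is a chain in the Bayesian order,
then x has at most binary spectrum. -/
theorem stmt13 {n : ℕ} (hn : 2 ≤ n) (x : Fin n → ℝ) (hx : IsDist x)
    (hchain : ∀ y z : Fin n → ℝ, IsDist y → IsDist z →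
      BayesLE y x → BayesLE z x → BayesLE y z ∨ BayesLE z y) :
    (Finset.univ.image x).card ≤ 2 :=
  stmt13_general x hx hchain
end

section
/- (Decomposition in coordinates) For every x ∈ Δⁿ with x ≠ ⊥, x is the supremum (in the Bayesian order) of its set of coordinates 𝓒^x, and moreover 𝓒^x = Max(Coord(Δⁿ) ∩ ↓x) \ {⊥}. -/
open Finset

/-- c is a coordinate of x: c has a two-block spectrum {a, b} with a > b ≥ 0,
its upper block is the union I₁ ∪ … ∪ Iⱼ of the top level sets of x
(i.e. {i | v ≤ x i} for a value v of x whose immediate predecessor value is w),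
and the spectral ratio satisfies a / b = v / w  (as a * w = v * b). -/
def IsCoord {n : ℕ} (x c : Fin n → ℝ) : Prop :=
  IsDist c ∧
  ∃ v w a b : ℝ,
    v ∈ Set.range x ∧ w ∈ Set.range x ∧ w < v ∧
    (¬ ∃ u ∈ Set.range x, w < u ∧ u < v) ∧
    0 ≤ b ∧ b < a ∧
    (∀ i, c i = if v ≤ x i then a else b) ∧
    a * w = v * b

section Helpers

variable {n : ℕ}

lemma antitone_of_adj {f : Fin n → ℝ}
    (h : ∀ i : ℕ, ∀ hi : i + 1 < n, f ⟨i+1, hi⟩ ≤ f ⟨i, Nat.lt_of_succ_lt hi⟩) :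
    Antitone f := by
  have key : ∀ j : ℕ, ∀ hj : j < n, ∀ i : ℕ, ∀ hi : i < n, i ≤ j →
      f ⟨j, hj⟩ ≤ f ⟨i, hi⟩ := by
    intro j
    induction j with
    | zero =>
      intro hj i hi hij
      have : i = 0 := Nat.le_zero.mp hij
      subst this; exact le_refl _
    | succ k ih =>
      intro hj i hi hij
      rcases Nat.lt_or_ge i (k+1) with hlt | hge
      · exact le_trans (h k hj) (ih (Nat.lt_of_succ_lt hj) i hi (Nat.lt_succ_iff.mp hlt))
      · have : i = k + 1 := le_antisymm hij hge
        subst this; exact le_refl _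
  intro a b hab
  have : f ⟨b.1, b.2⟩ ≤ f ⟨a.1, a.2⟩ := key b.1 b.2 a.1 a.2 hab
  simpa using this

lemma exists_sort_pair (x z : Fin n → ℝ) :
    ∃ σ : Equiv.Perm (Fin n), ∀ i : ℕ, ∀ hi : i + 1 < n,
      x (σ ⟨i+1, hi⟩) < x (σ ⟨i, Nat.lt_of_succ_lt hi⟩) ∨
      (x (σ ⟨i+1, hi⟩) = x (σ ⟨i, Nat.lt_of_succ_lt hi⟩) ∧
        z (σ ⟨i+1, hi⟩) ≤ z (σ ⟨i, Nat.lt_of_succ_lt hi⟩)) := by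
  classical
  refine ⟨Tuple.sort (fun i => toLex (-(x i), -(z i))), fun i hi => ?_⟩
  have h := Tuple.monotone_sort (fun i => toLex (-(x i), -(z i)))
    (show (⟨i, Nat.lt_of_succ_lt hi⟩ : Fin n) ≤ ⟨i+1, hi⟩ by
      simp [Fin.mk_le_mk])
  simp only [Function.comp_apply] at h
  rw [Prod.Lex.le_iff] at h
  rcases h with h | ⟨h1, h2⟩
  · left; simpa using h
  · right
    constructor
    · simpa using (neg_inj.mp h1).symm
    · simpa using h2

end Helpers

section TwoValued
variable {n : ℕ}

/-- Backward: extract pointwise inequalities from BayesLE of a two-valued dist. -/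
lemma bayesLE_elim {p : Fin n → Prop} [DecidablePred p] {a b : ℝ}
    {z : Fin n → ℝ} (hz : ∀ i, 0 ≤ z i) (hb : 0 ≤ b) (hab : b < a)
    (hp1 : ∃ i, p i) (hp2 : ∃ i, ¬ p i)
    (h : BayesLE (fun i => if p i then a else b) z) :
    ∀ i j, ¬ p i → p j → a * z i ≤ b * z j := by
  classical
  obtain ⟨σ, hc, hzs, hadj⟩ := h
  set S : Finset (Fin n) := Finset.univ.filter (fun i => p (σ i)) with hS
  have hSne : S.Nonempty := by
    obtain ⟨i, hi⟩ := hp1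
    exact ⟨σ.symm i, by simp [hS, hi]⟩
  set m := S.max' hSne with hm
  have hmS : p (σ m) := by
    have := S.max'_mem hSne
    simp only [hS, Finset.mem_filter] at this
    exact this.2
  have hgt : ∀ j : Fin n, ¬ p (σ j) → m < j := by
    intro j hj
    by_contra hle
    push_neg at hle
    have h1 := hc hle
    simp only [Function.comp_apply] at h1
    rw [if_pos hmS, if_neg hj] at h1
    exact absurd h1 (not_le.mpr hab)
  obtain ⟨j0, hj0⟩ := hp2
  have hj0gt : m < σ.symm j0 := by
    apply hgt
    simpa using hj0
  have hm1 : m.1 + 1 < n := lt_of_le_of_lt (Nat.succ_le_of_lt hj0gt) (σ.symm j0).2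
  set m' : Fin n := ⟨m.1 + 1, hm1⟩ with hm'
  have hmm' : m < m' := by simp [hm', Fin.lt_def]
  have hm'p : ¬ p (σ m') := by
    intro hp
    have : m' ∈ S := by simp [hS, hp]
    exact absurd (S.le_max' m' this) (not_le.mpr hmm')
  have hadjm := hadj m.1 hm1
  simp only [Function.comp_apply] at hadjm
  have hmeta : (⟨m.1, Nat.lt_of_succ_lt hm1⟩ : Fin n) = m := by simp [Fin.eta]
  rw [hmeta] at hadjm
  rw [if_pos hmS, if_neg hm'p] at hadjm
  -- hadjm : a * z (σ m') ≤ b * z (σ m)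
  intro i j hi hj
  have hiz : z i ≤ z (σ m') := by
    have hgti : m < σ.symm i := hgt _ (by simpa using hi)
    have : m' ≤ σ.symm i := by
      rw [Fin.le_def]
      exact Nat.succ_le_of_lt hgti
    have := hzs this
    simpa using this
  have hjz : z (σ m) ≤ z j := by
    have hjm : σ.symm j ≤ m := S.le_max' _ (by simp [hS, hj])
    have := hzs hjm
    simpa using this
  calc a * z i ≤ a * z (σ m') := by
        apply mul_le_mul_of_nonneg_left hiz (le_of_lt (lt_of_le_of_lt hb hab))
    _ ≤ b * z (σ m) := hadjm
    _ ≤ b * z j := mul_le_mul_of_nonneg_left hjz hb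

/-- Forward: construct BayesLE from pointwise inequalities. -/
lemma bayesLE_intro {p : Fin n → Prop} [DecidablePred p] {a b : ℝ}
    {z : Fin n → ℝ} (hz : ∀ i, 0 ≤ z i) (hb : 0 ≤ b) (hab : b < a)
    (h : ∀ i j, ¬ p i → p j → a * z i ≤ b * z j) :
    BayesLE (fun i => if p i then a else b) z := by
  classical
  set c : Fin n → ℝ := fun i => if p i then a else b with hcdef
  have hc0 : ∀ i, 0 ≤ c i := by
    intro i
    simp only [hcdef]
    split
    · exact le_of_lt (lt_of_le_of_lt hb hab)
    · exact hb
  obtain ⟨σ, hσ⟩ := exists_sort_pair c z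
  have key : ∀ i : ℕ, ∀ hi : i + 1 < n,
      c (σ ⟨i+1, hi⟩) ≤ c (σ ⟨i, Nat.lt_of_succ_lt hi⟩) ∧
      z (σ ⟨i+1, hi⟩) ≤ z (σ ⟨i, Nat.lt_of_succ_lt hi⟩) ∧
      c (σ ⟨i, Nat.lt_of_succ_lt hi⟩) * z (σ ⟨i+1, hi⟩) ≤
        c (σ ⟨i+1, hi⟩) * z (σ ⟨i, Nat.lt_of_succ_lt hi⟩) := by
    intro i hi
    rcases hσ i hi with hlt | ⟨heq, hzle⟩
    · -- c drops strictly: must be from a to b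
      have hup : p (σ ⟨i, Nat.lt_of_succ_lt hi⟩) := by
        by_contra hnp
        have h1 : c (σ ⟨i, Nat.lt_of_succ_lt hi⟩) = b := by simp [hcdef, hnp]
        have h2 : b ≤ c (σ ⟨i+1, hi⟩) := by
          simp only [hcdef]; split <;> linarith
        rw [h1] at hlt; linarith
      have hdn : ¬ p (σ ⟨i+1, hi⟩) := by
        by_contra hp2
        have h1 : c (σ ⟨i+1, hi⟩) = a := by simp [hcdef, hp2]
        have h2 : c (σ ⟨i, Nat.lt_of_succ_lt hi⟩) ≤ a := by
          simp only [hcdef]; split <;> linarith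
        rw [h1] at hlt; linarith
      have hca : c (σ ⟨i, Nat.lt_of_succ_lt hi⟩) = a := by simp [hcdef, hup]
      have hcb : c (σ ⟨i+1, hi⟩) = b := by simp [hcdef, hdn]
      have hadj := h _ _ hdn hup
      refine ⟨le_of_lt hlt, ?_, ?_⟩
      · -- z decreases across boundary
        have hz1 := hz (σ ⟨i, Nat.lt_of_succ_lt hi⟩)
        nlinarith [hz (σ ⟨i+1, hi⟩)]
      · rw [hca, hcb]; exact hadj
    · refine ⟨le_of_eq heq, hzle, ?_⟩
      rw [heq]
      exact mul_le_mul_of_nonneg_left hzle (hc0 _)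
  exact ⟨σ, antitone_of_adj (fun i hi => (key i hi).1),
    antitone_of_adj (fun i hi => (key i hi).2.1),
    fun i hi => (key i hi).2.2⟩

end TwoValued

section Coord
variable {n : ℕ}

lemma sum_ite_card {p : Fin n → Prop} [DecidablePred p] (a b : ℝ) :
    ∑ i, (if p i then a else b) =
      (Finset.univ.filter p).card * a + (Finset.univ.filter (fun i => ¬ p i)).card * b := by
  rw [Finset.sum_ite]
  simp [Finset.sum_const, nsmul_eq_mul]

/-- The canonical coordinate attached to an adjacent pair (v,w) of values of x. -/
lemma coord_exists {x : Fin n → ℝ} (hx : IsDist x) {v w : ℝ}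
    (hv : v ∈ Set.range x) (hw : w ∈ Set.range x) (hwv : w < v)
    (hadj : ¬ ∃ u ∈ Set.range x, w < u ∧ u < v) :
    ∃ S : ℝ, 0 < S ∧ IsCoord x (fun i => if v ≤ x i then v / S else w / S) := by
  classical
  obtain ⟨iv, hiv⟩ := hv
  obtain ⟨iw, hiw⟩ := hw
  have hw0 : 0 ≤ w := hiw ▸ hx.1 iw
  have hv0 : 0 < v := lt_of_le_of_lt hw0 hwv
  set K := (Finset.univ.filter (fun i => v ≤ x i)).card with hK
  set K' := (Finset.univ.filter (fun i => ¬ v ≤ x i)).card with hK'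
  have hK1 : 1 ≤ K := by
    rw [hK]
    refine Finset.card_pos.mpr ⟨iv, ?_⟩
    simp [hiv]
  set S : ℝ := K * v + K' * w with hS
  have hKr : (1:ℝ) ≤ K := by exact_mod_cast hK1
  have hSpos : 0 < S := by
    have h1 : v ≤ K * v := le_mul_of_one_le_left (le_of_lt hv0) hKr
    have h2 : (0:ℝ) ≤ K' * w := mul_nonneg (Nat.cast_nonneg _) hw0
    rw [hS]; linarith
  refine ⟨S, hSpos, ⟨?_, v, w, v / S, w / S, ⟨iv, hiv⟩, ⟨iw, hiw⟩, hwv, hadj,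
    div_nonneg hw0 (le_of_lt hSpos), (div_lt_div_iff_of_pos_right hSpos).mpr hwv,
    fun i => rfl, by ring⟩⟩
  constructor
  · intro i
    dsimp only
    split
    · exact div_nonneg (le_of_lt hv0) (le_of_lt hSpos)
    · exact div_nonneg hw0 (le_of_lt hSpos)
  · have hSne : S ≠ 0 := ne_of_gt hSpos
    rw [sum_ite_card, ← hK, ← hK']
    rw [hS]
    field_simp

/-- Pointwise inequalities satisfied by any coordinate. -/
lemma coord_pointwise {x : Fin n → ℝ} (hx : IsDist x) {v w a b : ℝ}
    (hwv : w < v) (hadj : ¬ ∃ u ∈ Set.range x, w < u ∧ u < v)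
    (hb : 0 ≤ b) (hab : b < a) (hr : a * w = v * b) :
    ∀ i j, ¬ v ≤ x i → v ≤ x j → a * x i ≤ b * x j := by
  intro i j hi hj
  have hxi : x i ≤ w := by
    by_contra hgt
    push_neg at hgt
    exact hadj ⟨x i, ⟨i, rfl⟩, hgt, lt_of_not_ge hi⟩
  have ha0 : 0 < a := lt_of_le_of_lt hb hab
  calc a * x i ≤ a * w := mul_le_mul_of_nonneg_left hxi (le_of_lt ha0)
    _ = v * b := hr
    _ ≤ x j * b := mul_le_mul_of_nonneg_right hj hb
    _ = b * x j := mul_comm _ _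

/-- Uniqueness of the coordinate data given the block and the ratio. -/
lemma coord_unique {x : Fin n → ℝ} {v w a b a' b' : ℝ} (hv0 : 0 < v) (hw0 : 0 ≤ w)
    (hsum : ∑ i, (if v ≤ x i then a else b) = 1)
    (hsum' : ∑ i, (if v ≤ x i then a' else b') = 1)
    (hU : ∃ i, v ≤ x i) (hrb : a * w = v * b) (hrb' : a' * w = v * b') :
    a = a' ∧ b = b' := by
  classical
  rw [sum_ite_card] at hsum hsum'
  set K := (Finset.univ.filter (fun i => v ≤ x i)).card with hK
  set K' := (Finset.univ.filter (fun i => ¬ v ≤ x i)).card with hK'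
  have hK1 : 1 ≤ K := by
    rw [hK]
    obtain ⟨i, hi⟩ := hU
    refine Finset.card_pos.mpr ⟨i, ?_⟩
    simp [hi]
  have hKr : (1:ℝ) ≤ K := by exact_mod_cast hK1
  have hT : (0:ℝ) < K * v + K' * w := by
    have h2 : (0:ℝ) ≤ K' * w := mul_nonneg (Nat.cast_nonneg _) hw0
    nlinarith
  have e1 : a * (K * v + K' * w) = v := by
    calc a * (K * v + K' * w) = K * a * v + K' * (a * w) := by ring
      _ = K * a * v + K' * (v * b) := by rw [hrb]
      _ = v * (K * a + K' * b) := by ring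
      _ = v := by rw [hsum]; ring
  have e2 : a' * (K * v + K' * w) = v := by
    calc a' * (K * v + K' * w) = K * a' * v + K' * (a' * w) := by ring
      _ = K * a' * v + K' * (v * b') := by rw [hrb']
      _ = v * (K * a' + K' * b') := by ring
      _ = v := by rw [hsum']; ring
  have ha : a = a' := mul_right_cancel₀ (ne_of_gt hT) (e1.trans e2.symm)
  refine ⟨ha, ?_⟩
  have : v * b = v * b' := by rw [← hrb, ← hrb', ha]
  exact mul_left_cancel₀ (ne_of_gt hv0) this

/-- Structure of a ≤2-valued nonuniform distribution. -/
lemma two_valued_structure {d : Fin n → ℝ} (hn : 2 ≤ n) (hd : IsDist d)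
    (hcard : (Finset.univ.image d).card ≤ 2) (hne : d ≠ fun _ => (n:ℝ)⁻¹) :
    ∃ a b : ℝ, 0 ≤ b ∧ b < a ∧ (∀ i, d i = a ∨ d i = b) ∧
      (∃ i, d i = a) ∧ (∃ i, d i = b) := by
  classical
  have hnc : ∃ i j : Fin n, d i ≠ d j := by
    by_contra hc
    push_neg at hc
    apply hne
    have hconst : ∀ i, d i = d ⟨0, by omega⟩ := fun i => hc i _
    have hsum : ∑ i, d i = n * d ⟨0, by omega⟩ := by
      rw [Finset.sum_congr rfl (fun i _ => hconst i)]
      simp [Finset.sum_const, mul_comm]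
    rw [hd.2] at hsum
    have hn0 : (n:ℝ) ≠ 0 := by positivity
    funext i
    rw [hconst i]
    field_simp
    linarith [hsum]
  obtain ⟨i0, j0, hij⟩ := hnc
  have h2le : 2 ≤ (Finset.univ.image d).card := by
    apply Finset.one_lt_card.mpr
    exact ⟨d i0, Finset.mem_image_of_mem d (Finset.mem_univ _), d j0,
      Finset.mem_image_of_mem d (Finset.mem_univ _), hij⟩
  have hc2 : (Finset.univ.image d).card = 2 := le_antisymm hcard h2le
  obtain ⟨s, t, hst, hset⟩ := Finset.card_eq_two.mp hc2
  have hmem : ∀ i, d i = s ∨ d i = t := by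
    intro i
    have : d i ∈ Finset.univ.image d := Finset.mem_image_of_mem d (Finset.mem_univ _)
    rw [hset] at this
    simpa using this
  have hs : ∃ i, d i = s := by
    have hmem' : s ∈ Finset.univ.image d := by rw [hset]; simp
    obtain ⟨i, _, hi⟩ := Finset.mem_image.mp hmem'
    exact ⟨i, hi⟩
  have ht : ∃ i, d i = t := by
    have hmem' : t ∈ Finset.univ.image d := by rw [hset]; simp
    obtain ⟨i, _, hi⟩ := Finset.mem_image.mp hmem'
    exact ⟨i, hi⟩
  refine ⟨max s t, min s t, ?_, min_lt_max.mpr hst, ?_, ?_, ?_⟩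
  · rcases le_total s t with h | h
    · obtain ⟨i, hi⟩ := hs
      rw [min_eq_left h, ← hi]; exact hd.1 i
    · obtain ⟨i, hi⟩ := ht
      rw [min_eq_right h, ← hi]; exact hd.1 i
  · intro i
    rcases hmem i with h | h <;> rcases le_total s t with h' | h'
    · right; rw [h, min_eq_left h']
    · left; rw [h, max_eq_left h']
    · left; rw [h, max_eq_right h']
    · right; rw [h, min_eq_right h']
  · rcases le_total s t with h' | h'
    · obtain ⟨i, hi⟩ := ht; exact ⟨i, by rw [hi, max_eq_right h']⟩
    · obtain ⟨i, hi⟩ := hs; exact ⟨i, by rw [hi, max_eq_left h']⟩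
  · rcases le_total s t with h' | h'
    · obtain ⟨i, hi⟩ := hs; exact ⟨i, by rw [hi, min_eq_left h']⟩
    · obtain ⟨i, hi⟩ := ht; exact ⟨i, by rw [hi, min_eq_right h']⟩

end Coord


set_option maxHeartbeats 1000000 in
/-- Decomposition in coordinates: every x ≠ ⊥ is the supremum of its set of
coordinates 𝓒^x, and 𝓒^x = Max(Coord(Δⁿ) ∩ ↓x) \ {⊥}. -/
theorem stmt14 {n : ℕ} (hn : 2 ≤ n) (x : Fin n → ℝ) (hx : IsDist x)
    (hbot : x ≠ fun _ => (n : ℝ)⁻¹) :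
    (∀ c, IsCoord x c → BayesLE c x) ∧
    (∀ z, IsDist z → (∀ c, IsCoord x c → BayesLE c z) → BayesLE x z) ∧
    ({c | IsCoord x c} =
      {c : Fin n → ℝ | IsDist c ∧ (Finset.univ.image c).card ≤ 2 ∧ BayesLE c x ∧
        ∀ d : Fin n → ℝ, IsDist d → (Finset.univ.image d).card ≤ 2 →
          BayesLE d x → BayesLE c d → d = c} \
      {fun _ => (n : ℝ)⁻¹}) := by
  classical
  have part1 : ∀ c, IsCoord x c → BayesLE c x := by
    rintro c ⟨hcd, v, w, a, b, hv, hw, hwv, hadj, hb, hba, hcif, hr⟩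
    have hceq : c = fun i => if v ≤ x i then a else b := funext hcif
    rw [hceq]
    exact bayesLE_intro hx.1 hb hba (coord_pointwise hx hwv hadj hb hba hr)
  have part2 : ∀ z, IsDist z → (∀ c, IsCoord x c → BayesLE c z) → BayesLE x z := by
    intro z hz hcz
    obtain ⟨σ, hσ⟩ := exists_sort_pair x z
    have hxa : Antitone (x ∘ σ) := antitone_of_adj (fun i hi => by
      rcases hσ i hi with h | h
      · exact le_of_lt h
      · exact le_of_eq h.1)
    have key : ∀ i : ℕ, ∀ hi : i + 1 < n,
        z (σ ⟨i+1, hi⟩) ≤ z (σ ⟨i, Nat.lt_of_succ_lt hi⟩) ∧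
        x (σ ⟨i, Nat.lt_of_succ_lt hi⟩) * z (σ ⟨i+1, hi⟩) ≤
          x (σ ⟨i+1, hi⟩) * z (σ ⟨i, Nat.lt_of_succ_lt hi⟩) := by
      intro i hi
      rcases hσ i hi with hlt | ⟨heq, hzle⟩
      · set A : Fin n := ⟨i, Nat.lt_of_succ_lt hi⟩ with hA
        set B : Fin n := ⟨i+1, hi⟩ with hB
        have hadjv : ¬ ∃ u ∈ Set.range x, x (σ B) < u ∧ u < x (σ A) := by
          rintro ⟨u, ⟨p, rfl⟩, h1, h2⟩
          set q := σ.symm p with hq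
          have hpq : x (σ q) = x p := by rw [hq]; simp
          rcases le_or_gt q A with hle | hgt
          · have hc := hxa hle
            simp only [Function.comp_apply] at hc
            rw [hpq] at hc; linarith
          · have hBq : B ≤ q := by
              rw [Fin.le_def, hB]
              rw [Fin.lt_def, hA] at hgt
              exact hgt
            have hc := hxa hBq
            simp only [Function.comp_apply] at hc
            rw [hpq] at hc; linarith
        obtain ⟨S, hS, hc⟩ := coord_exists hx ⟨σ A, rfl⟩ ⟨σ B, rfl⟩ hlt hadjv
        have hbz := hcz _ hc
        have hwa0 : 0 ≤ x (σ B) := hx.1 _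
        have hva0 : 0 < x (σ A) := lt_of_le_of_lt hwa0 hlt
        have helim := bayesLE_elim (p := fun j => x (σ A) ≤ x j) hz.1
          (div_nonneg hwa0 (le_of_lt hS)) ((div_lt_div_iff_of_pos_right hS).mpr hlt)
          ⟨σ A, le_refl _⟩ ⟨σ B, not_le.mpr hlt⟩ hbz (σ B) (σ A) (not_le.mpr hlt) (le_refl _)
        have hmain : x (σ A) * z (σ B) ≤ x (σ B) * z (σ A) := by
          have h2 := mul_le_mul_of_nonneg_right helim (le_of_lt hS)
          rw [mul_right_comm, div_mul_cancel₀ _ (ne_of_gt hS),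
              mul_right_comm (x (σ B) / S), div_mul_cancel₀ _ (ne_of_gt hS)] at h2
          exact h2
        refine ⟨?_, hmain⟩
        nlinarith [hz.1 (σ A), hz.1 (σ B), mul_le_mul_of_nonneg_right (le_of_lt hlt) (hz.1 (σ A))]
      · refine ⟨hzle, ?_⟩
        rw [heq]
        exact mul_le_mul_of_nonneg_left hzle (hx.1 _)
    exact ⟨σ, hxa, antitone_of_adj (fun i hi => (key i hi).1), fun i hi => (key i hi).2⟩
  refine ⟨part1, part2, ?_⟩
  ext c
  simp only [Set.mem_setOf_eq, Set.mem_diff, Set.mem_singleton_iff]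
  constructor
  · rintro ⟨hcdist, v, w, a, b, hv, hw, hwv, hadj, hb, hba, hcif, hr⟩
    obtain ⟨iv, hiv⟩ := hv
    obtain ⟨iw, hiw⟩ := hw
    have hw0 : 0 ≤ w := hiw ▸ hx.1 iw
    have hv0 : 0 < v := lt_of_le_of_lt hw0 hwv
    have ha0 : 0 < a := lt_of_le_of_lt hb hba
    have hUv : v ≤ x iv := le_of_eq hiv.symm
    have hUw : ¬ v ≤ x iw := by rw [hiw]; exact not_le.mpr hwv
    have hceq : c = fun i => if v ≤ x i then a else b := funext hcif
    have hccard : (Finset.univ.image c).card ≤ 2 := by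
      have hsub : Finset.univ.image c ⊆ {a, b} := by
        intro t ht
        obtain ⟨i, _, hi⟩ := Finset.mem_image.mp ht
        rw [← hi, hcif i]
        by_cases hvi : v ≤ x i <;> simp [hvi]
      exact le_trans (Finset.card_le_card hsub)
        (le_trans (Finset.card_insert_le _ _) (by simp))
    refine ⟨⟨hcdist, hccard,
      part1 c ⟨hcdist, v, w, a, b, ⟨iv, hiv⟩, ⟨iw, hiw⟩, hwv, hadj, hb, hba, hcif, hr⟩,
      ?_⟩, ?_⟩
    · -- maximality
      intro d hd hdcard hdx hcd
      have hdne : d ≠ fun _ => (n:ℝ)⁻¹ := by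
        rintro rfl
        rw [hceq] at hcd
        have hnpos : (0:ℝ) < (n:ℝ)⁻¹ := by
          have : (0:ℝ) < n := by positivity
          positivity
        have helim := bayesLE_elim (p := fun i => v ≤ x i) (z := fun _ => (n:ℝ)⁻¹)
          (fun _ => le_of_lt hnpos) hb hba ⟨iv, hUv⟩ ⟨iw, hUw⟩ hcd iw iv hUw hUv
        nlinarith
      obtain ⟨a', b', hb', hab', hda, hpa, hpb⟩ := two_valued_structure hn hd hdcard hdne
      have ha'0 : 0 < a' := lt_of_le_of_lt hb' hab'
      have hdif : ∀ i, d i = if d i = a' then a' else b' := by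
        intro i
        by_cases h : d i = a'
        · simp [h]
        · rw [if_neg h]
          exact (hda i).resolve_left h
      have hdeq : d = fun i => if d i = a' then a' else b' := funext hdif
      have hpa' : ∃ i, ¬ d i = a' := by
        obtain ⟨i, hi⟩ := hpb
        exact ⟨i, by rw [hi]; exact ne_of_lt hab'⟩
      have h1 : ∀ i j, ¬ v ≤ x i → v ≤ x j → a * d i ≤ b * d j := by
        have hcd' := hcd
        rw [hceq] at hcd'
        exact bayesLE_elim hd.1 hb hba ⟨iv, hUv⟩ ⟨iw, hUw⟩ hcd'
      have h2 : ∀ i j, ¬ d i = a' → d j = a' → a' * x i ≤ b' * x j := by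
        have hdx' := hdx
        rw [hdeq] at hdx'
        exact bayesLE_elim hx.1 hb' hab' hpa hpa' hdx'
      have hdge : ∀ i, b' ≤ d i := by
        intro i
        rcases hda i with h | h
        · rw [h]; exact le_of_lt hab'
        · rw [h]
      have main : (∀ i, (d i = a' ↔ v ≤ x i)) ∧ a' * w = v * b' := by
        by_cases hA : ∃ j, v ≤ x j ∧ d j ≠ a'
        · obtain ⟨j0, hj0U, hj0⟩ := hA
          have hdj0 : d j0 = b' := (hda j0).resolve_left hj0
          have hb'0 : b' = 0 := by
            have h1' := h1 iw j0 hUw hj0U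
            rw [hdj0] at h1'
            have := hdge iw
            nlinarith
          have hUd : ∀ i, ¬ v ≤ x i → d i = b' := by
            intro i hi
            have h1' := h1 i j0 hi hj0U
            rw [hdj0, hb'0] at h1'
            have h3 := hdge i
            rw [hb'0] at h3
            have hz : d i = 0 := le_antisymm (by nlinarith) h3
            rw [hz, hb'0]
          have hsupp : ∀ i, d i ≠ a' → x i = 0 := by
            intro i hi
            obtain ⟨ia, hia⟩ := hpa
            have h2' := h2 i ia hi hia
            rw [hb'0] at h2'
            have := hx.1 i
            nlinarith
          have hiff : ∀ i, d i = a' ↔ v ≤ x i := by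
            intro i
            constructor
            · intro h
              by_contra hU
              have hcon := hUd i hU
              rw [h, hb'0] at hcon
              linarith
            · intro h
              by_contra hne
              have hz := hsupp i hne
              rw [hz] at h
              linarith
          have hwz : w = 0 := by
            have hiwne : d iw ≠ a' := fun hcon => hUw ((hiff iw).mp hcon)
            have := hsupp iw hiwne
            rw [hiw] at this
            exact this
          exact ⟨hiff, by rw [hwz, hb'0]; ring⟩
        · push_neg at hA
          have hiff : ∀ i, d i = a' ↔ v ≤ x i := by
            intro i
            refine ⟨fun h => ?_, hA i⟩
            by_contra hU
            have h1' := h1 i iv hU hUv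
            rw [h, hA iv hUv] at h1'
            nlinarith
          have hiw' : d iw = b' := by
            have hne : d iw ≠ a' := fun hcon => hUw ((hiff iw).mp hcon)
            exact (hda iw).resolve_left hne
          have i1 := h2 iw iv (by rw [hiw']; exact ne_of_lt hab') (hA iv hUv)
          rw [hiw, hiv] at i1
          have i2 := h1 iw iv hUw hUv
          rw [hiw', hA iv hUv] at i2
          have h4 : v * (a * b') ≤ v * (b * a') := mul_le_mul_of_nonneg_left i2 (le_of_lt hv0)
          have h5 : a' * (a * w) = a' * (v * b) := by rw [hr]
          have i3 : v * b' ≤ a' * w := by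
            have hstep : a * (v * b') ≤ a * (a' * w) := by
              calc a * (v * b') = v * (a * b') := by ring
                _ ≤ v * (b * a') := h4
                _ = a' * (v * b) := by ring
                _ = a' * (a * w) := h5.symm
                _ = a * (a' * w) := by ring
            exact le_of_mul_le_mul_left hstep ha0
          exact ⟨hiff, le_antisymm (by linarith) (by linarith)⟩
      obtain ⟨hiff, hrb'⟩ := main
      have hdform : ∀ i, d i = if v ≤ x i then a' else b' := by
        intro i
        by_cases hvi : v ≤ x i
        · rw [if_pos hvi]; exact (hiff i).mpr hvi
        · rw [if_neg hvi]
          exact (hda i).resolve_left (fun h => hvi ((hiff i).mp h))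
      have hsum_c : ∑ i, (if v ≤ x i then a else b) = 1 := by
        calc ∑ i, (if v ≤ x i then a else b) = ∑ i, c i :=
              Finset.sum_congr rfl (fun i _ => (hcif i).symm)
          _ = 1 := hcdist.2
      have hsum_d : ∑ i, (if v ≤ x i then a' else b') = 1 := by
        calc ∑ i, (if v ≤ x i then a' else b') = ∑ i, d i :=
              Finset.sum_congr rfl (fun i _ => (hdform i).symm)
          _ = 1 := hd.2
      obtain ⟨haa, hbb⟩ := coord_unique hv0 hw0 hsum_c hsum_d ⟨iv, hUv⟩ hr hrb'
      funext i
      rw [hdform i, hcif i, ← haa, ← hbb]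
    · -- c ≠ ⊥
      intro hcon
      have e1 : c iv = (n:ℝ)⁻¹ := congrFun hcon iv
      have e2 : c iw = (n:ℝ)⁻¹ := congrFun hcon iw
      have h1 := hcif iv
      have h2 := hcif iw
      rw [if_pos hUv] at h1
      rw [if_neg hUw] at h2
      rw [e1] at h1
      rw [e2] at h2
      rw [← h1, ← h2] at hba
      exact lt_irrefl _ hba
  · rintro ⟨⟨hcd, hccard, hcx, hmax⟩, hcne⟩
    obtain ⟨a', b', hb', hab', hda, hpa, hpb⟩ := two_valued_structure hn hcd hccard hcne
    have ha'0 : 0 < a' := lt_of_le_of_lt hb' hab'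
    have hdif : ∀ i, c i = if c i = a' then a' else b' := by
      intro i
      by_cases h : c i = a'
      · simp [h]
      · rw [if_neg h]
        exact (hda i).resolve_left h
    have hdeq : c = fun i => if c i = a' then a' else b' := funext hdif
    have hpa' : ∃ i, ¬ c i = a' := by
      obtain ⟨i, hi⟩ := hpb
      exact ⟨i, by rw [hi]; exact ne_of_lt hab'⟩
    have h2 : ∀ i j, ¬ c i = a' → c j = a' → a' * x i ≤ b' * x j := by
      have hcx' := hcx
      rw [hdeq] at hcx'
      exact bayesLE_elim hx.1 hb' hab' hpa hpa' hcx'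
    set U' : Finset (Fin n) := Finset.univ.filter (fun i => c i = a') with hU'
    have hU'ne : U'.Nonempty := by
      obtain ⟨i, hi⟩ := hpa
      exact ⟨i, by simp [hU', hi]⟩
    set Uc : Finset (Fin n) := Finset.univ.filter (fun i => ¬ c i = a') with hUc
    have hUcne : Uc.Nonempty := by
      obtain ⟨i, hi⟩ := hpa'
      exact ⟨i, by simp [hUc, hi]⟩
    obtain ⟨im, himU, him⟩ := Finset.exists_min_image U' x hU'ne
    obtain ⟨iM, hiMU, hiM⟩ := Finset.exists_max_image Uc x hUcne
    have himd : c im = a' := by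
      have := himU; rw [hU', Finset.mem_filter] at this; exact this.2
    have hiMd : ¬ c iM = a' := by
      have := hiMU; rw [hUc, Finset.mem_filter] at this; exact this.2
    have hkey : a' * x iM ≤ b' * x im := h2 iM im hiMd himd
    have hm0 : 0 ≤ x im := hx.1 im
    rcases eq_or_lt_of_le hm0 with hm | hm
    · -- min over upper block is 0 : x supported strictly inside the block
      have hM0 : x iM = 0 := by nlinarith [hx.1 iM]
      have hsupp : ∀ i, ¬ c i = a' → x i = 0 := by
        intro i hi
        have hle := hiM i (by rw [hUc, Finset.mem_filter]; exact ⟨Finset.mem_univ _, hi⟩)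
        have := hx.1 i
        rw [hM0] at hle
        linarith
      have hex : ∃ i, 0 < x i := by
        by_contra hno
        push_neg at hno
        have hz : ∑ i, x i = 0 :=
          Finset.sum_eq_zero (fun i _ => le_antisymm (hno i) (hx.1 i))
        rw [hx.2] at hz
        norm_num at hz
      set P : Finset ℝ := (Finset.univ.image x).filter (fun t => 0 < t) with hP
      have hPne : P.Nonempty := by
        obtain ⟨i, hi⟩ := hex
        exact ⟨x i, by
          rw [hP, Finset.mem_filter]
          exact ⟨Finset.mem_image_of_mem x (Finset.mem_univ _), hi⟩⟩
      set v := P.min' hPne with hvdef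
      have hvP : v ∈ P := P.min'_mem hPne
      have hv0 : 0 < v := by
        rw [hP, Finset.mem_filter] at hvP
        exact hvP.2
      have hvr : v ∈ Set.range x := by
        have hvP' := hvP
        rw [hP, Finset.mem_filter] at hvP'
        obtain ⟨i, _, hi⟩ := Finset.mem_image.mp hvP'.1
        exact ⟨i, hi⟩
      have h0r : (0:ℝ) ∈ Set.range x := ⟨im, hm.symm⟩
      have hadj : ¬ ∃ u ∈ Set.range x, 0 < u ∧ u < v := by
        rintro ⟨u, ⟨p, rfl⟩, h1u, h2u⟩
        have hmem : x p ∈ P := by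
          rw [hP, Finset.mem_filter]
          exact ⟨Finset.mem_image_of_mem x (Finset.mem_univ _), h1u⟩
        exact absurd (P.min'_le _ hmem) (not_le.mpr h2u)
      obtain ⟨S, hS, hc⟩ := coord_exists hx hvr h0r hv0 hadj
      set cS : Fin n → ℝ := fun i => if v ≤ x i then v / S else (0:ℝ) / S with hcS
      have hccard2 : (Finset.univ.image cS).card ≤ 2 := by
        have hsub : Finset.univ.image cS ⊆ {v / S, (0:ℝ) / S} := by
          intro t ht
          obtain ⟨i, _, hi⟩ := Finset.mem_image.mp ht
          rw [← hi, hcS]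
          dsimp only
          by_cases hvi : v ≤ x i <;> simp [hvi]
        exact le_trans (Finset.card_le_card hsub)
          (le_trans (Finset.card_insert_le _ _) (by simp))
      have hdc : BayesLE c cS := by
        rw [hdeq]
        apply bayesLE_intro hc.1.1 hb' hab'
        intro i j hi hj
        have hxi : x i = 0 := hsupp i hi
        have hci : cS i = 0 := by
          rw [hcS]
          dsimp only
          rw [if_neg (by rw [hxi]; exact not_le.mpr hv0)]
          simp
        rw [hci, mul_zero]
        exact mul_nonneg hb' (hc.1.1 j)
      have heq := hmax cS hc.1 hccard2 (part1 _ hc) hdc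
      rw [← heq]
      exact hc
    · -- min over upper block is positive
      have hMm : x iM < x im := by
        have hlt : a' * x iM < a' * x im :=
          lt_of_le_of_lt hkey (mul_lt_mul_of_pos_right hab' hm)
        exact lt_of_mul_lt_mul_left hlt (le_of_lt ha'0)
      set T : Finset ℝ := (Finset.univ.image x).filter (fun t => t < x im) with hT
      have hTne : T.Nonempty := ⟨x iM, by
        rw [hT, Finset.mem_filter]
        exact ⟨Finset.mem_image_of_mem x (Finset.mem_univ _), hMm⟩⟩
      set w := T.max' hTne with hwdef
      have hwT : w ∈ T := T.max'_mem hTne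
      have hwlt : w < x im := by
        rw [hT, Finset.mem_filter] at hwT
        exact hwT.2
      have hwr : w ∈ Set.range x := by
        have hwT' := hwT
        rw [hT, Finset.mem_filter] at hwT'
        obtain ⟨i, _, hi⟩ := Finset.mem_image.mp hwT'.1
        exact ⟨i, hi⟩
      have hMw : x iM ≤ w := T.le_max' _ (by
        rw [hT, Finset.mem_filter]
        exact ⟨Finset.mem_image_of_mem x (Finset.mem_univ _), hMm⟩)
      have hadjvw : ¬ ∃ u ∈ Set.range x, w < u ∧ u < x im := by
        rintro ⟨u, ⟨p, rfl⟩, h1u, h2u⟩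
        have hmem : x p ∈ T := by
          rw [hT, Finset.mem_filter]
          exact ⟨Finset.mem_image_of_mem x (Finset.mem_univ _), h2u⟩
        exact absurd (T.le_max' _ hmem) (not_le.mpr h1u)
      have hUiff : ∀ i, x im ≤ x i ↔ c i = a' := by
        intro i
        constructor
        · intro h
          by_contra hne
          have hle := hiM i (by rw [hUc, Finset.mem_filter]; exact ⟨Finset.mem_univ _, hne⟩)
          linarith
        · intro h
          exact him i (by rw [hU', Finset.mem_filter]; exact ⟨Finset.mem_univ _, h⟩)
      have hwM : w ≤ x iM := by
        obtain ⟨p, hp⟩ := hwr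
        have hdp : ¬ c p = a' := by
          intro hcon
          have := (hUiff p).mpr hcon
          rw [hp] at this
          linarith
        have hle := hiM p (by rw [hUc, Finset.mem_filter]; exact ⟨Finset.mem_univ _, hdp⟩)
        rw [hp] at hle
        exact hle
      have hweq : w = x iM := le_antisymm hwM hMw
      have hkey2 : a' * w ≤ b' * x im := by rw [hweq]; exact hkey
      obtain ⟨S, hS, hc⟩ := coord_exists hx ⟨im, rfl⟩ hwr hwlt hadjvw
      set cS : Fin n → ℝ := fun i => if x im ≤ x i then x im / S else w / S with hcS
      have hccard2 : (Finset.univ.image cS).card ≤ 2 := by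
        have hsub : Finset.univ.image cS ⊆ {x im / S, w / S} := by
          intro t ht
          obtain ⟨i, _, hi⟩ := Finset.mem_image.mp ht
          rw [← hi, hcS]
          dsimp only
          by_cases hvi : x im ≤ x i <;> simp [hvi]
        exact le_trans (Finset.card_le_card hsub)
          (le_trans (Finset.card_insert_le _ _) (by simp))
      have hdc : BayesLE c cS := by
        rw [hdeq]
        apply bayesLE_intro hc.1.1 hb' hab'
        intro i j hi hj
        have hxi : ¬ x im ≤ x i := fun hcon => hi ((hUiff i).mp hcon)
        have hxj : x im ≤ x j := (hUiff j).mpr hj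
        rw [hcS]
        dsimp only
        rw [if_neg hxi, if_pos hxj, ← mul_div_assoc, ← mul_div_assoc]
        exact (div_le_div_iff_of_pos_right hS).mpr hkey2
      have heq := hmax cS hc.1 hccard2 (part1 _ hc) hdc
      rw [← heq]
      exact hc
end

section
/- Each coordinate c(j) ∈ 𝓒^x is below x in the Bayesian order: for all x ∈ Δⁿ \ {⊥} and all j ∈ {1,…,n^x − 1}, c(j) ⊑ x. -/
open Finset

/-- Each coordinate of x is below x in the Bayesian order. -/
theorem stmt15 {n : ℕ} (hn : 2 ≤ n) (x : Fin n → ℝ) (hx : IsDist x)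
    (hbot : x ≠ fun _ => (n : ℝ)⁻¹) :
    ∀ c, IsCoord x c → BayesLE c x := by
  rintro c ⟨hcdist, v, w, a, b, hv, hw, hwv, hnou, hb, hba, hc, hratio⟩
  classical
  have ha : 0 ≤ a := le_of_lt (lt_of_le_of_lt hb hba)
  set σ := Tuple.sort (fun i => -x i) with hσ
  have hmono : Monotone ((fun i => -x i) ∘ σ) := Tuple.monotone_sort _
  have hx_anti : Antitone (x ∘ σ) := by
    intro i j hij
    have := hmono hij
    simpa using this
  refine ⟨σ, ?_, hx_anti, ?_⟩
  · intro i j hij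
    have hxy : x (σ j) ≤ x (σ i) := hx_anti hij
    simp only [Function.comp_apply, hc]
    by_cases h : v ≤ x (σ j)
    · rw [if_pos h, if_pos (le_trans h hxy)]
    · rw [if_neg h]
      split
      · exact le_of_lt hba
      · exact le_refl b
  · intro i h
    have hle : (⟨i, Nat.lt_of_succ_lt h⟩ : Fin n) ≤ ⟨i + 1, h⟩ := by
      simp [Fin.le_def]
    have hxy : x (σ ⟨i + 1, h⟩) ≤ x (σ ⟨i, Nat.lt_of_succ_lt h⟩) := hx_anti hle
    set p := σ ⟨i, Nat.lt_of_succ_lt h⟩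
    set q := σ ⟨i + 1, h⟩
    simp only [Function.comp_apply, hc]
    by_cases hq : v ≤ x q
    · rw [if_pos hq, if_pos (le_trans hq hxy)]
      exact mul_le_mul_of_nonneg_left hxy ha
    · rw [if_neg hq]
      by_cases hp : v ≤ x p
      · rw [if_pos hp]
        have hqw : x q ≤ w := by
          by_contra hcon
          exact hnou ⟨x q, ⟨q, rfl⟩, lt_of_not_ge hcon, lt_of_not_ge hq⟩
        calc a * x q ≤ a * w := mul_le_mul_of_nonneg_left hqw ha
          _ = v * b := hratio
          _ ≤ x p * b := mul_le_mul_of_nonneg_right hp hb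
          _ = b * x p := mul_comm _ _
      · rw [if_neg hp]
        exact mul_le_mul_of_nonneg_left hxy hb
end

section
/- Shannon entropy is strictly increasing downward along each Bayesian chain of coordinates: if x, y ∈ Δⁿ both have at most binary spectrum with the same two-block partition, and x ⊑ y with x ≠ y, then μ(x) > μ(y), where μ is Shannon entropy. -/
open Finset

/-- Shannon entropy. -/
noncomputable def shannonEntropy {n : ℕ} (x : Fin n → ℝ) : ℝ :=
  -∑ i, x i * Real.log (x i)

private lemma key_convex_ge {a b : ℝ} (ha : 0 < a) (hb : 0 < b) :
    b * Real.log a + b - a ≤ b * Real.log b := by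
  have h := Real.log_le_sub_one_of_pos (x := a / b) (div_pos ha hb)
  have hlog : Real.log (a / b) = Real.log a - Real.log b := Real.log_div ha.ne' hb.ne'
  rw [hlog] at h
  have := mul_le_mul_of_nonneg_left h hb.le
  have hdiv : b * (a / b - 1) = a - b := by field_simp
  nlinarith

private lemma key_convex_gt {c d : ℝ} (hc : 0 < c) (hd : 0 ≤ d) (hne : d ≠ c) :
    d * Real.log c + d - c < d * Real.log d := by
  rcases eq_or_lt_of_le hd with h0 | h0
  · rw [← h0]
    simp
    linarith
  · have h := Real.log_lt_sub_one_of_pos (x := c / d) (div_pos hc h0)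
      (by intro h; apply hne; field_simp at h; linarith)
    have hlog : Real.log (c / d) = Real.log c - Real.log d := Real.log_div hc.ne' h0.ne'
    rw [hlog] at h
    have := mul_lt_mul_of_pos_left h h0
    have hdiv : d * (c / d - 1) = c - d := by field_simp
    nlinarith

private lemma key {k m : ℕ} (hk : 0 < k) (hm : 0 < m) {a c b d : ℝ}
    (hc0 : 0 ≤ c) (hd0 : 0 ≤ d)
    (hsx : k * a + m * c = 1) (hsy : k * b + m * d = 1)
    (hca : c ≤ a) (hdb : d ≤ b) (hcross : a * d ≤ c * b)
    (hne : a ≠ b ∨ c ≠ d) :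
    k * (a * Real.log a) + m * (c * Real.log c)
      < k * (b * Real.log b) + m * (d * Real.log d) := by
  have hkR : (0:ℝ) < k := by exact_mod_cast hk
  have hmR : (0:ℝ) < m := by exact_mod_cast hm
  have hiff : a = b ↔ c = d := by
    constructor
    · intro h; subst h; exact mul_left_cancel₀ hmR.ne' (by linarith)
    · intro h; subst h; exact mul_left_cancel₀ hkR.ne' (by linarith)
  have hab : a ≠ b := by
    rcases hne with h | h
    · exact h
    · exact fun he => h (hiff.mp he)
  have hcd : c ≠ d := by exact fun he => hab (hiff.mpr he)
  -- show a < b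
  have hblt : a < b := by
    by_contra hle
    push_neg at hle
    have hba : b < a := lt_of_le_of_ne hle (Ne.symm hab)
    have hdc : c < d := by nlinarith
    have hd0' : 0 < d := lt_of_le_of_lt hc0 hdc
    nlinarith
  have hcd' : d < c := by nlinarith
  have hc0' : 0 < c := lt_of_le_of_lt hd0 hcd'
  have ha0 : 0 < a := lt_of_lt_of_le hc0' hca
  have hb0 : 0 < b := lt_trans ha0 hblt
  have h1 : b * Real.log a + b - a ≤ b * Real.log b := key_convex_ge ha0 hb0
  have h2 : d * Real.log c + d - c < d * Real.log d := key_convex_gt hc0' hd0 hcd'.ne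
  have hlogac : Real.log c ≤ Real.log a := Real.log_le_log hc0' hca
  have hmd : (m:ℝ) * (d - c) = (k:ℝ) * (a - b) := by nlinarith
  -- combine
  have e1 : (k:ℝ)*(b*Real.log a) + m*(d*Real.log c) - k*(a*Real.log a) - m*(c*Real.log c)
      = k*(b-a)*(Real.log a - Real.log c) := by
    linear_combination Real.log c * hmd
  have e2 : 0 ≤ (k:ℝ)*(b-a)*(Real.log a - Real.log c) :=
    mul_nonneg (mul_nonneg hkR.le (by linarith)) (by linarith)
  have h1k := mul_le_mul_of_nonneg_left h1 hkR.le
  have h2m := mul_lt_mul_of_pos_left h2 hmR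
  nlinarith [h1k, h2m, e1, e2]

private lemma comb {n : ℕ} (x y : Fin n → ℝ) (σ : Equiv.Perm (Fin n))
    (hxm : Antitone (x ∘ σ)) (hym : Antitone (y ∘ σ)) (hadj : AdjLE (x ∘ σ) (y ∘ σ))
    (i₀ j₀ : Fin n) (B : Finset (Fin n)) (hi : i₀ ∈ B) (hj : j₀ ∉ B)
    (hxB : ∀ i ∈ B, x i = x i₀) (hxC : ∀ i, i ∉ B → x i = x j₀)
    (hyB : ∀ i ∈ B, y i = y i₀) (hyC : ∀ i, i ∉ B → y i = y j₀)
    (hbd : y j₀ < y i₀) :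
    x j₀ ≤ x i₀ ∧ x i₀ * y j₀ ≤ x j₀ * y i₀ := by
  classical
  set P : Finset (Fin n) := Finset.univ.filter (fun p => σ p ∈ B) with hP
  have hmemP : ∀ p, p ∈ P ↔ σ p ∈ B := by
    intro p; simp [hP]
  have hPne : P.Nonempty := ⟨σ.symm i₀, by simp [hP, hi]⟩
  have hdown : ∀ p ∈ P, ∀ q, q ≤ p → q ∈ P := by
    intro p hp q hq
    rw [hmemP] at hp ⊢
    by_contra hqB
    have h1 : y (σ p) = y i₀ := hyB _ hp
    have h2 : y (σ q) = y j₀ := hyC _ hqB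
    have := hym hq
    simp only [Function.comp_apply] at this
    rw [h1, h2] at this
    exact absurd this (not_le.mpr hbd)
  set p := P.max' hPne with hpdef
  have hpP : p ∈ P := P.max'_mem hPne
  have hq0 : σ.symm j₀ ∉ P := by
    rw [hmemP]; simp [hj]
  have hplt : p < σ.symm j₀ := by
    rcases lt_or_ge p (σ.symm j₀) with h | h
    · exact h
    · exact absurd (hdown p hpP _ h) hq0
  have h1n : p.val + 1 < n := by
    have h2 : p.val < (σ.symm j₀).val := hplt
    omega
  set p' : Fin n := ⟨p.val + 1, h1n⟩ with hp'def
  have hp'P : p' ∉ P := by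
    intro hmem
    have := P.le_max' p' hmem
    rw [← hpdef] at this
    have : p'.val ≤ p.val := this
    simp [hp'def] at this
  have hσp : σ p ∈ B := (hmemP p).mp hpP
  have hσp' : σ p' ∉ B := fun h => hp'P ((hmemP p').mpr h)
  have hxp : x (σ p) = x i₀ := hxB _ hσp
  have hyp : y (σ p) = y i₀ := hyB _ hσp
  have hxp' : x (σ p') = x j₀ := hxC _ hσp'
  have hyp' : y (σ p') = y j₀ := hyC _ hσp'
  constructor
  · have := hxm (show p ≤ p' from by simp [hp'def, Fin.le_def])
    simpa [Function.comp_apply, hxp, hxp'] using this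
  · have := hadj p.val h1n
    simp only [Function.comp_apply] at this
    have hpe : (⟨p.val, Nat.lt_of_succ_lt h1n⟩ : Fin n) = p := by
      apply Fin.ext; rfl
    rw [hpe] at this
    have hpe' : (⟨p.val + 1, h1n⟩ : Fin n) = p' := rfl
    rw [hpe'] at this
    rwa [hxp, hyp, hxp', hyp'] at this

private lemma mono_of_adj {n : ℕ} (u : Fin n → ℝ)
    (h : ∀ i : ℕ, ∀ hi : i + 1 < n, u ⟨i, Nat.lt_of_succ_lt hi⟩ ≤ u ⟨i + 1, hi⟩) :
    Monotone u := by
  have key : ∀ d j, ∀ hjd : j + d < n, u ⟨j, by omega⟩ ≤ u ⟨j + d, hjd⟩ := by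
    intro d
    induction d with
    | zero => intro j hjd; exact le_rfl
    | succ d ih =>
      intro j hjd
      have h1 : j + d + 1 < n := by omega
      calc u ⟨j, by omega⟩ ≤ u ⟨j + d, by omega⟩ := ih j (by omega)
        _ ≤ u ⟨j + d + 1, h1⟩ := h (j + d) h1
        _ = u ⟨j + (d + 1), hjd⟩ := rfl
  intro q q' hle
  have hv : q.val ≤ q'.val := hle
  have hthis := key (q'.val - q.val) q.val (by omega)
  have e1 : (⟨q.val, by omega⟩ : Fin n) = q := rfl
  have e2 : (⟨q.val + (q'.val - q.val), by omega⟩ : Fin n) = q' :=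
    Fin.ext (show q.val + (q'.val - q.val) = q'.val by omega)
  rw [e1, e2] at hthis
  exact hthis

/-- Shannon entropy is strictly decreasing upward along each coordinate axis:
if x and y are constant on the same two-block partition (B, Bᶜ)
and x ⊑ y with x ≠ y, then μ(x) > μ(y). -/
theorem stmt18 {n : ℕ} (hn : 2 ≤ n) (x y : Fin n → ℝ)
    (hx : IsDist x) (hy : IsDist y)
    (B : Finset (Fin n)) (hB : B.Nonempty) (hBne : B ≠ Finset.univ)
    (hxB : ∀ i ∈ B, ∀ j ∈ B, x i = x j) (hxBc : ∀ i ∉ B, ∀ j ∉ B, x i = x j)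
    (hyB : ∀ i ∈ B, ∀ j ∈ B, y i = y j) (hyBc : ∀ i ∉ B, ∀ j ∉ B, y i = y j)
    (hxy : BayesLE x y) (hne : x ≠ y) :
    shannonEntropy y < shannonEntropy x := by
  classical
  obtain ⟨i₀, hi⟩ := hB
  obtain ⟨j₀, hj⟩ : ∃ j, j ∉ B := by
    by_contra hc; push_neg at hc; exact hBne (Finset.eq_univ_iff_forall.mpr hc)
  obtain ⟨σ, hxσ, hyσ, hadj⟩ := hxy
  have hk : 0 < B.card := Finset.card_pos.mpr ⟨i₀, hi⟩
  have hm : 0 < Bᶜ.card := Finset.card_pos.mpr ⟨j₀, Finset.mem_compl.mpr hj⟩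
  have hkm : B.card + Bᶜ.card = n := by
    rw [Finset.card_add_card_compl]; exact Fintype.card_fin n
  have sumsplit : ∀ f : Fin n → ℝ, (∀ i ∈ B, f i = f i₀) → (∀ i, i ∉ B → f i = f j₀) →
      ∑ i, f i = B.card * f i₀ + Bᶜ.card * f j₀ := by
    intro f hfB hfC
    rw [← Finset.sum_add_sum_compl B f]
    congr 1
    · rw [Finset.sum_congr rfl hfB, Finset.sum_const, nsmul_eq_mul]
    · rw [Finset.sum_congr rfl (fun i hi' => hfC i (Finset.mem_compl.mp hi')),
        Finset.sum_const, nsmul_eq_mul]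
  have hsx : (B.card : ℝ) * x i₀ + (Bᶜ.card : ℝ) * x j₀ = 1 := by
    rw [← hx.2]
    exact (sumsplit x (fun i h => hxB i h i₀ hi) (fun i h => hxBc i h j₀ hj)).symm
  have hsy : (B.card : ℝ) * y i₀ + (Bᶜ.card : ℝ) * y j₀ = 1 := by
    rw [← hy.2]
    exact (sumsplit y (fun i h => hyB i h i₀ hi) (fun i h => hyBc i h j₀ hj)).symm
  have hEx : shannonEntropy x
      = -((B.card : ℝ) * (x i₀ * Real.log (x i₀)) + (Bᶜ.card : ℝ) * (x j₀ * Real.log (x j₀))) := by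
    unfold shannonEntropy
    rw [sumsplit (fun i => x i * Real.log (x i))
      (fun i h => show x i * Real.log (x i) = x i₀ * Real.log (x i₀) by rw [hxB i h i₀ hi])
      (fun i h => show x i * Real.log (x i) = x j₀ * Real.log (x j₀) by rw [hxBc i h j₀ hj])]
  have hEy : shannonEntropy y
      = -((B.card : ℝ) * (y i₀ * Real.log (y i₀)) + (Bᶜ.card : ℝ) * (y j₀ * Real.log (y j₀))) := by
    unfold shannonEntropy
    rw [sumsplit (fun i => y i * Real.log (y i))
      (fun i h => show y i * Real.log (y i) = y i₀ * Real.log (y i₀) by rw [hyB i h i₀ hi])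
      (fun i h => show y i * Real.log (y i) = y j₀ * Real.log (y j₀) by rw [hyBc i h j₀ hj])]
  rw [hEx, hEy, neg_lt_neg_iff]
  have hneor : x i₀ ≠ y i₀ ∨ x j₀ ≠ y j₀ := by
    by_contra hc
    push_neg at hc
    apply hne
    funext i
    by_cases hiB : i ∈ B
    · rw [hxB i hiB i₀ hi, hc.1, hyB i₀ hi i hiB]
    · rw [hxBc i hiB j₀ hj, hc.2, hyBc j₀ hj i hiB]
  rcases lt_trichotomy (y j₀) (y i₀) with hlt | heq | hgt
  · obtain ⟨hca, hcross⟩ := comb x y σ hxσ hyσ hadj i₀ j₀ B hi hj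
      (fun i h => hxB i h i₀ hi) (fun i h => hxBc i h j₀ hj)
      (fun i h => hyB i h i₀ hi) (fun i h => hyBc i h j₀ hj) hlt
    exact key hk hm (hx.1 j₀) (hy.1 j₀) hsx hsy hca hlt.le hcross hneor
  · -- y is constant, then AdjLE forces x constant too, so x = y, contradiction
    exfalso
    have hyc : ∀ i, y i = y i₀ := by
      intro i
      by_cases hiB : i ∈ B
      · exact hyB i hiB i₀ hi
      · rw [hyBc i hiB j₀ hj, heq]
    have hnR : (0:ℝ) < (B.card : ℝ) + (Bᶜ.card : ℝ) := by
      have : (0:ℝ) < (B.card : ℝ) := by exact_mod_cast hk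
      have : (0:ℝ) ≤ (Bᶜ.card : ℝ) := by positivity
      linarith
    have hvy : (0:ℝ) < y i₀ := by
      rw [heq] at hsy
      nlinarith
    have hadj' : ∀ i : ℕ, ∀ hi' : i + 1 < n,
        (x ∘ σ) ⟨i, Nat.lt_of_succ_lt hi'⟩ ≤ (x ∘ σ) ⟨i + 1, hi'⟩ := by
      intro i hi'
      have hthis := hadj i hi'
      simp only [Function.comp_apply] at hthis ⊢
      rw [hyc (σ ⟨i + 1, hi'⟩), hyc (σ ⟨i, Nat.lt_of_succ_lt hi'⟩)] at hthis
      exact le_of_mul_le_mul_right hthis hvy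
    have hmono : Monotone (x ∘ σ) := mono_of_adj _ hadj'
    have hcx : x i₀ = x j₀ := by
      have e1 : (x ∘ σ) (σ.symm i₀) = x i₀ := by simp
      have e2 : (x ∘ σ) (σ.symm j₀) = x j₀ := by simp
      rcases le_total (σ.symm i₀) (σ.symm j₀) with h | h
      · have := le_antisymm (hmono h) (hxσ h)
        rw [e1, e2] at this; exact this
      · have := le_antisymm (hxσ h) (hmono h)
        rw [e1, e2] at this; exact this
    have hxy0 : x i₀ = y i₀ := by
      apply mul_left_cancel₀ hnR.ne'
      rw [← hcx] at hsx
      rw [heq] at hsy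
      ring_nf
      ring_nf at hsx hsy
      linarith
    apply hne
    funext i
    by_cases hiB : i ∈ B
    · rw [hxB i hiB i₀ hi, hxy0, ← hyc i]
    · rw [hxBc i hiB j₀ hj, ← hcx, hxy0, ← hyc i]
  · obtain ⟨hac, hcross⟩ := comb x y σ hxσ hyσ hadj j₀ i₀ Bᶜ (Finset.mem_compl.mpr hj)
      (by simp [hi])
      (fun i h => hxBc i (Finset.mem_compl.mp h) j₀ hj)
      (fun i h => hxB i (by simpa using h) i₀ hi)
      (fun i h => hyBc i (Finset.mem_compl.mp h) j₀ hj)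
      (fun i h => hyB i (by simpa using h) i₀ hi) hgt
    have := key hm hk (hx.1 i₀) (hy.1 i₀) (by linarith) (by linarith) hac hgt.le hcross
      (Or.symm hneor)
    linarith
end
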